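/- arXiv:2006.01739 — 9 statements merged into one kernel-verified Lean document; each statement's English description precedes it below -/
import Mathlib

section
/- Let H be a complex Hilbert space, K a closed subspace of H, and U a bounded linear operator on H with the following properties: (1) U x = x for every x ∈ K; (2) U maps K⊥ into K⊥; (3) there exists α < 1 such that ‖U x‖ ≤ α‖x‖ for every x ∈ K⊥. Then for every sequence (x_k) in H with ‖x_k‖ ≤ 1 for all k and lim_{k→∞} ‖U x_k‖ = 1, one has lim_{k→∞} (I − U) x_k = 0. -/
/-!
Split `x = p + q` with `p ∈ K` and `q ∈ Kᗮ`. Then `U x = p + U q` is again an orthogonal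
decomposition, so `‖x‖² - ‖U x‖² = ‖q‖² - ‖U q‖² ≥ (1 - α²) ‖q‖²`. Hence `‖x_k‖ ≤ 1` and
`‖U x_k‖ → 1` force the `Kᗮ`-components `q_k` to vanish, and `x_k - U x_k = (1 - U) q_k → 0`.
-/

open Filter Topology

section Decomposition

variable {𝕜 E : Type*} [RCLike 𝕜] [NormedAddCommGroup E] [InnerProductSpace 𝕜 E]
  {K : Submodule 𝕜 E}

theorem Submodule.norm_add_sq_of_mem_orthogonal {p q : E} (hp : p ∈ K) (hq : q ∈ Kᗮ) :
    ‖p + q‖ ^ 2 = ‖p‖ ^ 2 + ‖q‖ ^ 2 := by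
  simpa only [sq] using norm_add_sq_eq_norm_sq_add_norm_sq_of_inner_eq_zero p q
    (K.inner_right_of_mem_orthogonal hp hq)

variable [K.HasOrthogonalProjection] {U : E →L[𝕜] E}

theorem apply_eq_starProjection_add_apply (hfix : ∀ x ∈ K, U x = x) (x : E) :
    U x = K.starProjection x + U (Kᗮ.starProjection x) := by
  conv_lhs => rw [← K.starProjection_add_starProjection_orthogonal x]
  rw [map_add, hfix _ (K.starProjection_apply_mem x)]

theorem sub_apply_eq_apply_starProjection_orthogonal (hfix : ∀ x ∈ K, U x = x) (x : E) :
    x - U x = (1 - U) (Kᗮ.starProjection x) := by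
  change _ = Kᗮ.starProjection x - U (Kᗮ.starProjection x)
  rw [apply_eq_starProjection_add_apply hfix x]
  nth_rewrite 1 [← K.starProjection_add_starProjection_orthogonal x]
  abel

theorem mul_norm_sq_starProjection_orthogonal_le (hfix : ∀ x ∈ K, U x = x)
    (hinv : ∀ x ∈ Kᗮ, U x ∈ Kᗮ) {α : ℝ} (hcon : ∀ x ∈ Kᗮ, ‖U x‖ ≤ α * ‖x‖) (x : E) :
    (1 - α ^ 2) * ‖Kᗮ.starProjection x‖ ^ 2 ≤ ‖x‖ ^ 2 - ‖U x‖ ^ 2 := by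
  set q := Kᗮ.starProjection x
  have hq : q ∈ Kᗮ := Kᗮ.starProjection_apply_mem x
  have hUq : ‖U q‖ ^ 2 ≤ α ^ 2 * ‖q‖ ^ 2 := by
    rw [← mul_pow]
    exact pow_le_pow_left₀ (norm_nonneg _) (hcon q hq) 2
  have hUx : ‖U x‖ ^ 2 = ‖K.starProjection x‖ ^ 2 + ‖U q‖ ^ 2 := by
    rw [apply_eq_starProjection_add_apply hfix x,
      Submodule.norm_add_sq_of_mem_orthogonal (K.starProjection_apply_mem x) (hinv q hq)]
  rw [K.norm_sq_eq_add_norm_sq_starProjection x, hUx]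
  linarith

theorem tendsto_starProjection_orthogonal_zero (hfix : ∀ x ∈ K, U x = x)
    (hinv : ∀ x ∈ Kᗮ, U x ∈ Kᗮ) {α : ℝ} (hα : α < 1) (hcon : ∀ x ∈ Kᗮ, ‖U x‖ ≤ α * ‖x‖)
    {ι : Type*} {l : Filter ι} {x : ι → E} (hx : ∀ k, ‖x k‖ ≤ 1)
    (hlim : Tendsto (fun k => ‖U (x k)‖) l (𝓝 1)) :
    Tendsto (fun k => Kᗮ.starProjection (x k)) l (𝓝 0) := by
  -- replacing `α` by `max α 0` makes `1 - α ^ 2` positive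
  set β := max α 0
  have hβ : 0 < 1 - β ^ 2 := by
    have : β < 1 := max_lt hα one_pos
    nlinarith [le_max_right α 0]
  have hconβ : ∀ y ∈ Kᗮ, ‖U y‖ ≤ β * ‖y‖ := fun y hy =>
    (hcon y hy).trans (by gcongr; exact le_max_left α 0)
  have hbound : ∀ k, ‖Kᗮ.starProjection (x k)‖ ^ 2 ≤ (1 - ‖U (x k)‖ ^ 2) / (1 - β ^ 2) := by
    intro k
    rw [le_div_iff₀' hβ]
    have := mul_norm_sq_starProjection_orthogonal_le hfix hinv hconβ (x k)
    nlinarith [hx k, norm_nonneg (x k)]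
  have hsq : Tendsto (fun k => ‖Kᗮ.starProjection (x k)‖ ^ 2) l (𝓝 0) := by
    refine squeeze_zero (fun k => sq_nonneg _) hbound ?_
    simpa using ((tendsto_const_nhds (x := (1 : ℝ))).sub (hlim.pow 2)).div_const (1 - β ^ 2)
  rw [tendsto_zero_iff_norm_tendsto_zero]
  simpa using hsq.sqrt

end Decomposition

theorem stmt_2_general {H : Type*} [NormedAddCommGroup H] [InnerProductSpace ℂ H]
    (K : Submodule ℂ H) [CompleteSpace K] (U : H →L[ℂ] H)
    (hfix : ∀ x ∈ K, U x = x)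
    (hinv : ∀ x ∈ Kᗮ, U x ∈ Kᗮ)
    (α : ℝ) (hα : α < 1)
    (hcon : ∀ x ∈ Kᗮ, ‖U x‖ ≤ α * ‖x‖)
    (x : ℕ → H) (hx : ∀ k, ‖x k‖ ≤ 1)
    (hlim : Filter.Tendsto (fun k => ‖U (x k)‖) Filter.atTop (nhds 1)) :
    Filter.Tendsto (fun k => x k - U (x k)) Filter.atTop (nhds 0) := by
  have hq := tendsto_starProjection_orthogonal_zero hfix hinv hα hcon hx hlim
  have h := ((1 - U).continuous.tendsto 0).comp hq
  rw [map_zero] at h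
  exact h.congr fun k => (sub_apply_eq_apply_starProjection_orthogonal hfix (x k)).symm

/-- If a bounded linear operator `U` fixes a closed subspace `K`, maps `Kᗮ` into
itself, and satisfies `‖U x‖ ≤ α ‖x‖` on `Kᗮ` for some `α < 1`, then for every sequence
`(x_k)` with `‖x_k‖ ≤ 1` and `‖U x_k‖ → 1`, one has `(I - U) x_k → 0`. -/
theorem stmt_2 {H : Type*} [NormedAddCommGroup H] [InnerProductSpace ℂ H] [CompleteSpace H]
    (K : Submodule ℂ H) [CompleteSpace K] (U : H →L[ℂ] H)
    (hfix : ∀ x ∈ K, U x = x)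
    (hinv : ∀ x ∈ Kᗮ, U x ∈ Kᗮ)
    (α : ℝ) (hα : α < 1)
    (hcon : ∀ x ∈ Kᗮ, ‖U x‖ ≤ α * ‖x‖)
    (x : ℕ → H) (hx : ∀ k, ‖x k‖ ≤ 1)
    (hlim : Filter.Tendsto (fun k => ‖U (x k)‖) Filter.atTop (nhds 1)) :
    Filter.Tendsto (fun k => x k - U (x k)) Filter.atTop (nhds 0) :=
  stmt_2_general K U hfix hinv α hα hcon x hx hlim
end

section
/- Let G be a finite index set, let a_u (u ∈ G) be nonzero vectors in ℂ^d, and let T = Σ_{j=1}^{t} w_j R_j, where w_1,…,w_t > 0 with Σ_{j=1}^{t} w_j = 1 and each R_j is a finite composition of relaxed projections P_{a_u}^{ω_u} with indices u ∈ G and real relaxation parameters ω_u. Assume there exists α < 1 such that ‖T x‖ ≤ α‖x‖ for every x ∈ span{a_u : u ∈ G}. Then for every sequence (x_k) in ℂ^d with ‖x_k‖ ≤ 1 for all k and ‖T x_k‖ → 1, it follows that (I − T) x_k → 0. -/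
/-- The relaxed projection `P_a^ω x = x - ω (⟨x,a⟩/‖a‖²) a` associated to a vector `a ∈ ℂ^d`
and a real relaxation parameter `ω`.  (Here `⟨x,a⟩` is linear in `x`, i.e. `inner a x` in
Mathlib's convention.) -/
noncomputable def relaxProj {d : ℕ} (a : EuclideanSpace ℂ (Fin d)) (ω : ℝ)
    (x : EuclideanSpace ℂ (Fin d)) : EuclideanSpace ℂ (Fin d) :=
  x - ((ω : ℂ) * ((inner ℂ a x : ℂ) / (‖a‖ : ℂ) ^ 2)) • a

/-!
Let `S = span {a_u}`. Each relaxed projection `P_{a_u}^{ω_u}` maps `S` into itself and fixes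
`Sᗮ` pointwise, and since the weights sum to one, so does `T`. Splitting `x = p + q` with
`p ∈ S`, `q ∈ Sᗮ`, we get `x - T x = p - T p` and, by Pythagoras,
`‖x‖² - ‖T x‖² = ‖p‖² - ‖T p‖² ≥ (1 - α²) ‖p‖²`. Hence `‖T x_k‖ → 1` forces the component
`p_k` of `x_k` in `S`, and with it `x_k - T x_k`, to tend to zero.
-/

open Filter Topology

section Contraction

variable {𝕜 E : Type*} [RCLike 𝕜] [NormedAddCommGroup E] [InnerProductSpace 𝕜 E]
  {S : Submodule 𝕜 E} [S.HasOrthogonalProjection] {T : E → E}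

theorem apply_eq_apply_starProjection_add (hT : ∀ p, ∀ q ∈ Sᗮ, T (p + q) = T p + q) (x : E) :
    T x = T (S.starProjection x) + (x - S.starProjection x) := by
  conv_lhs => rw [← add_sub_cancel (S.starProjection x) x]
  exact hT _ _ (S.sub_starProjection_mem_orthogonal x)

theorem sub_apply_eq_sub_apply_starProjection (hT : ∀ p, ∀ q ∈ Sᗮ, T (p + q) = T p + q)
    (x : E) : x - T x = S.starProjection x - T (S.starProjection x) := by
  rw [apply_eq_apply_starProjection_add hT x]
  abel

theorem norm_sq_sub_norm_sq_apply_eq (hT : ∀ p, ∀ q ∈ Sᗮ, T (p + q) = T p + q)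
    (hTS : ∀ p ∈ S, T p ∈ S) (x : E) :
    ‖x‖ ^ 2 - ‖T x‖ ^ 2 = ‖S.starProjection x‖ ^ 2 - ‖T (S.starProjection x)‖ ^ 2 := by
  have hp := S.starProjection_apply_mem x
  have hq := S.sub_starProjection_mem_orthogonal x
  have hx : ‖x‖ ^ 2 = ‖S.starProjection x‖ ^ 2 + ‖x - S.starProjection x‖ ^ 2 := by
    simp only [sq]
    rw [← norm_add_sq_eq_norm_sq_add_norm_sq_of_inner_eq_zero (𝕜 := 𝕜) _ _
      (Submodule.inner_right_of_mem_orthogonal hp hq), add_sub_cancel]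
  have hTx : ‖T x‖ ^ 2 = ‖T (S.starProjection x)‖ ^ 2 + ‖x - S.starProjection x‖ ^ 2 := by
    simp only [sq]
    rw [apply_eq_apply_starProjection_add hT x, norm_add_sq_eq_norm_sq_add_norm_sq_of_inner_eq_zero
      (𝕜 := 𝕜) _ _ (Submodule.inner_right_of_mem_orthogonal (hTS _ hp) hq)]
  rw [hx, hTx]
  ring

theorem one_sub_mul_norm_sub_apply_sq_le (hT : ∀ p, ∀ q ∈ Sᗮ, T (p + q) = T p + q)
    (hTS : ∀ p ∈ S, T p ∈ S) {β : ℝ} (hβ0 : 0 ≤ β) (hβ1 : β ≤ 1)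
    (hcon : ∀ y ∈ S, ‖T y‖ ≤ β * ‖y‖) (x : E) :
    (1 - β) * ‖x - T x‖ ^ 2 ≤ (1 + β) * (‖x‖ ^ 2 - ‖T x‖ ^ 2) := by
  set p := S.starProjection x
  have hTp : ‖T p‖ ≤ β * ‖p‖ := hcon p (S.starProjection_apply_mem x)
  have hdefect : ‖x - T x‖ ≤ (1 + β) * ‖p‖ := by
    rw [sub_apply_eq_sub_apply_starProjection hT]
    calc ‖p - T p‖ ≤ ‖p‖ + ‖T p‖ := norm_sub_le _ _
      _ ≤ (1 + β) * ‖p‖ := by linarith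
  rw [norm_sq_sub_norm_sq_apply_eq hT hTS]
  have hTp_sq : ‖T p‖ ^ 2 ≤ (β * ‖p‖) ^ 2 := pow_le_pow_left₀ (norm_nonneg _) hTp 2
  have hdefect_sq : ‖x - T x‖ ^ 2 ≤ ((1 + β) * ‖p‖) ^ 2 :=
    pow_le_pow_left₀ (norm_nonneg _) hdefect 2
  nlinarith [mul_le_mul_of_nonneg_left hdefect_sq (sub_nonneg.mpr hβ1)]

theorem tendsto_sub_apply_nhds_zero (hT : ∀ p, ∀ q ∈ Sᗮ, T (p + q) = T p + q)
    (hTS : ∀ p ∈ S, T p ∈ S) {α : ℝ} (hα : α < 1) (hcon : ∀ y ∈ S, ‖T y‖ ≤ α * ‖y‖)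
    {x : ℕ → E} (hx : ∀ k, ‖x k‖ ≤ 1) (hlim : Tendsto (fun k => ‖T (x k)‖) atTop (𝓝 1)) :
    Tendsto (fun k => x k - T (x k)) atTop (𝓝 0) := by
  set β := max α 0
  have hβ1 : β < 1 := max_lt hα one_pos
  have hconβ : ∀ y ∈ S, ‖T y‖ ≤ β * ‖y‖ := fun y hy =>
    (hcon y hy).trans (mul_le_mul_of_nonneg_right (le_max_left _ _) (norm_nonneg _))
  have hbound : ∀ k, ‖x k - T (x k)‖ ^ 2 ≤ (1 + β) / (1 - β) * (1 - ‖T (x k)‖ ^ 2) := by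
    intro k
    have hdefect := one_sub_mul_norm_sub_apply_sq_le hT hTS (le_max_right _ _) hβ1.le hconβ (x k)
    have hxk : ‖x k‖ ^ 2 ≤ 1 := pow_le_one₀ (norm_nonneg _) (hx k)
    rw [div_mul_eq_mul_div, le_div_iff₀ (sub_pos.mpr hβ1)]
    nlinarith [le_max_right α 0]
  have hsq : Tendsto (fun k => ‖x k - T (x k)‖ ^ 2) atTop (𝓝 0) := by
    refine squeeze_zero (fun k => by positivity) hbound ?_
    simpa using ((hlim.pow 2).const_sub 1).const_mul ((1 + β) / (1 - β))
  rw [tendsto_zero_iff_norm_tendsto_zero]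
  simpa [Real.sqrt_sq (norm_nonneg _)] using hsq.sqrt

end Contraction

section RelaxedProjection

variable {d : ℕ}

theorem relaxProj_add_of_inner_eq_zero {a q : EuclideanSpace ℂ (Fin d)} (ω : ℝ)
    (h : inner ℂ a q = 0) (p : EuclideanSpace ℂ (Fin d)) :
    relaxProj a ω (p + q) = relaxProj a ω p + q := by
  simp only [relaxProj, inner_add_right, h, add_zero]
  abel

theorem relaxProj_mem {S : Submodule ℂ (EuclideanSpace ℂ (Fin d))}
    {a p : EuclideanSpace ℂ (Fin d)} (ω : ℝ) (ha : a ∈ S) (hp : p ∈ S) :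
    relaxProj a ω p ∈ S :=
  S.sub_mem hp (S.smul_mem _ ha)

variable {G : Type*}

/-- The composition `P_{a_{u_n}}^{ω_{u_n}} ∘ ⋯ ∘ P_{a_{u_1}}^{ω_{u_1}}` for `l = [u_1, …, u_n]`. -/
noncomputable def relaxProjComp (a : G → EuclideanSpace ℂ (Fin d)) (ω : G → ℝ) (l : List G)
    (x : EuclideanSpace ℂ (Fin d)) : EuclideanSpace ℂ (Fin d) :=
  l.foldl (fun y u => relaxProj (a u) (ω u) y) x

theorem relaxProjComp_add_of_mem_orthogonal (a : G → EuclideanSpace ℂ (Fin d)) (ω : G → ℝ)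
    (l : List G) (p : EuclideanSpace ℂ (Fin d)) {q : EuclideanSpace ℂ (Fin d)}
    (hq : q ∈ (Submodule.span ℂ (Set.range a))ᗮ) :
    relaxProjComp a ω l (p + q) = relaxProjComp a ω l p + q := by
  induction l generalizing p with
  | nil => rfl
  | cons u l ih =>
    have h : inner ℂ (a u) q = 0 :=
      Submodule.inner_right_of_mem_orthogonal (Submodule.mem_span_of_mem (Set.mem_range_self u)) hq
    simp only [relaxProjComp, List.foldl_cons, relaxProj_add_of_inner_eq_zero _ h]
    exact ih _

theorem relaxProjComp_mem_span (a : G → EuclideanSpace ℂ (Fin d)) (ω : G → ℝ) (l : List G)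
    {p : EuclideanSpace ℂ (Fin d)} (hp : p ∈ Submodule.span ℂ (Set.range a)) :
    relaxProjComp a ω l p ∈ Submodule.span ℂ (Set.range a) := by
  induction l generalizing p with
  | nil => exact hp
  | cons u l ih => exact ih (relaxProj_mem _ (Submodule.mem_span_of_mem (Set.mem_range_self u)) hp)

end RelaxedProjection

theorem stmt_3_general {d : ℕ} {G : Type*}
    (a : G → EuclideanSpace ℂ (Fin d)) (ω : G → ℝ)
    (t : ℕ) (w : Fin t → ℝ) (hw1 : ∑ j, w j = 1)
    (L : Fin t → List G)
    (T : EuclideanSpace ℂ (Fin d) → EuclideanSpace ℂ (Fin d))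
    (hT : ∀ x, T x = ∑ j, w j • ((L j).foldl (fun y u => relaxProj (a u) (ω u) y) x))
    (α : ℝ) (hα : α < 1)
    (hcon : ∀ x ∈ Submodule.span ℂ (Set.range a), ‖T x‖ ≤ α * ‖x‖)
    (x : ℕ → EuclideanSpace ℂ (Fin d)) (hx : ∀ k, ‖x k‖ ≤ 1)
    (hlim : Filter.Tendsto (fun k => ‖T (x k)‖) Filter.atTop (nhds 1)) :
    Filter.Tendsto (fun k => x k - T (x k)) Filter.atTop (nhds 0) := by
  have hT_comp : ∀ x, T x = ∑ j, w j • relaxProjComp a ω (L j) x := hT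
  refine tendsto_sub_apply_nhds_zero (fun p q hq => ?_) (fun p hp => ?_) hα hcon hx hlim
  · simp only [hT_comp, relaxProjComp_add_of_mem_orthogonal a ω _ p hq, smul_add,
      Finset.sum_add_distrib, ← Finset.sum_smul, hw1, one_smul]
  · rw [hT_comp]
    exact Submodule.sum_mem _ fun j _ =>
      Submodule.smul_of_tower_mem _ _ (relaxProjComp_mem_span a ω (L j) hp)

/-- If `T = Σ_j w_j R_j` is a convex combination of finite compositions `R_j` of
relaxed projections `P_{a_u}^{ω_u}` with `u` in a finite index set `G`, and `‖T x‖ ≤ α ‖x‖` on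
`span{a_u : u ∈ G}` for some `α < 1`, then for every sequence `(x_k)` with `‖x_k‖ ≤ 1` and
`‖T x_k‖ → 1`, one has `(I - T) x_k → 0`. -/
theorem stmt_3 {d : ℕ} {G : Type*} [Fintype G]
    (a : G → EuclideanSpace ℂ (Fin d)) (ha : ∀ u, a u ≠ 0) (ω : G → ℝ)
    (t : ℕ) (w : Fin t → ℝ) (hw : ∀ j, 0 < w j) (hw1 : ∑ j, w j = 1)
    (L : Fin t → List G)
    (T : EuclideanSpace ℂ (Fin d) → EuclideanSpace ℂ (Fin d))
    (hT : ∀ x, T x = ∑ j, w j • ((L j).foldl (fun y u => relaxProj (a u) (ω u) y) x))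
    (α : ℝ) (hα : α < 1)
    (hcon : ∀ x ∈ Submodule.span ℂ (Set.range a), ‖T x‖ ≤ α * ‖x‖)
    (x : ℕ → EuclideanSpace ℂ (Fin d)) (hx : ∀ k, ‖x k‖ ≤ 1)
    (hlim : Filter.Tendsto (fun k => ‖T (x k)‖) Filter.atTop (nhds 1)) :
    Filter.Tendsto (fun k => x k - T (x k)) Filter.atTop (nhds 0) :=
  stmt_3_general a ω t w hw1 L T hT α hα hcon x hx hlim
end

section
/- Let a_1,…,a_n be nonzero vectors in ℂ^d with relaxation parameters ω_1,…,ω_n ∈ (0,2), and let R = P_{a_n}^{ω_n} ∘ ⋯ ∘ P_{a_1}^{ω_1} be the composition of the corresponding relaxed projections. Let C be a linear operator on ℂ^d with ‖C x‖ ≤ ‖x‖ for all x that has the asymptotic-fixing property. Then the operator T = C ∘ R also has the asymptotic-fixing property. -/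
def AsympFix {d : ℕ} (T : EuclideanSpace ℂ (Fin d) → EuclideanSpace ℂ (Fin d)) : Prop :=
  ∀ x : ℕ → EuclideanSpace ℂ (Fin d), (∀ k, ‖x k‖ ≤ 1) →
    Filter.Tendsto (fun k => ‖T (x k)‖) Filter.atTop (nhds 1) →
    Filter.Tendsto (fun k => x k - T (x k)) Filter.atTop (nhds 0)

/-!
For `ω ∈ (0, 2)` the relaxed projection `P` satisfies
`‖x - P x‖² = ω / (2 - ω) · (‖x‖² - ‖P x‖²)`, so it is norm-nonincreasing, and a sequence in the
unit ball on which `‖P x_k‖ → 1` has `‖x_k‖² - ‖P x_k‖² → 0`, hence `x_k - P x_k → 0`.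
Both properties pass to compositions: if `‖T (S x_k)‖ → 1` then also `‖S x_k‖ → 1`, and
`x_k - T (S x_k) = (x_k - S x_k) + (S x_k - T (S x_k))`.
-/

open Filter Topology RCLike
open scoped InnerProductSpace

theorem two_sub_mul_norm_sq_eq {𝕜 E : Type*} [RCLike 𝕜] [NormedAddCommGroup E]
    [InnerProductSpace 𝕜 E] {x v : E} {ω : ℝ} (h : ⟪v, v⟫_𝕜 = ω * ⟪v, x⟫_𝕜) :
    (2 - ω) * ‖v‖ ^ 2 = ω * (‖x‖ ^ 2 - ‖x - v‖ ^ 2) := by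
  have hre : ‖v‖ ^ 2 = ω * re ⟪v, x⟫_𝕜 := by
    rw [@norm_sq_eq_re_inner 𝕜, h, re_ofReal_mul]
  rw [@norm_sub_sq 𝕜, inner_re_symm]
  linear_combination 2 * hre

theorem List.norm_foldl_le {α ι : Type*} [Norm α] {f : ι → α → α} (hf : ∀ i x, ‖f i x‖ ≤ ‖x‖)
    (l : List ι) (x : α) : ‖l.foldl (fun y i => f i y) x‖ ≤ ‖x‖ := by
  induction l generalizing x with
  | nil => exact le_rfl
  | cons i l ih => exact (ih _).trans (hf i x)

section AsympFix

variable {d : ℕ}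

theorem asympFix_id : AsympFix (id : EuclideanSpace ℂ (Fin d) → _) := by
  intro x _ _
  simp

theorem asympFix_of_norm_sub_sq_le {T : EuclideanSpace ℂ (Fin d) → EuclideanSpace ℂ (Fin d)}
    {c : ℝ} (hc : 0 ≤ c) (hT : ∀ x, ‖x - T x‖ ^ 2 ≤ c * (‖x‖ ^ 2 - ‖T x‖ ^ 2)) :
    AsympFix T := by
  intro x hx hTx
  have hbound : ∀ k, ‖x k - T (x k)‖ ^ 2 ≤ c * (1 - ‖T (x k)‖ ^ 2) := fun k => by
    have : ‖x k‖ ^ 2 ≤ 1 := pow_le_one₀ (norm_nonneg _) (hx k)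
    nlinarith [hT (x k)]
  have hlim : Tendsto (fun k => c * (1 - ‖T (x k)‖ ^ 2)) atTop (𝓝 0) := by
    simpa using ((hTx.pow 2).const_sub 1).const_mul c
  have hsq : Tendsto (fun k => ‖x k - T (x k)‖ ^ 2) atTop (𝓝 0) :=
    squeeze_zero (fun _ => by positivity) hbound hlim
  rw [tendsto_zero_iff_norm_tendsto_zero]
  simpa using hsq.sqrt

theorem AsympFix.comp {S T : EuclideanSpace ℂ (Fin d) → EuclideanSpace ℂ (Fin d)}
    (hT : AsympFix T) (hS : AsympFix S) (hTn : ∀ x, ‖T x‖ ≤ ‖x‖) (hSn : ∀ x, ‖S x‖ ≤ ‖x‖) :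
    AsympFix (T ∘ S) := by
  intro x hx hTSx
  have hSx : ∀ k, ‖S (x k)‖ ≤ 1 := fun k => (hSn _).trans (hx k)
  have hSx_lim : Tendsto (fun k => ‖S (x k)‖) atTop (𝓝 1) :=
    tendsto_of_tendsto_of_tendsto_of_le_of_le hTSx tendsto_const_nhds (fun k => hTn _) hSx
  simpa using (hS x hx hSx_lim).add (hT (fun k => S (x k)) hSx hTSx)

theorem asympFix_foldl {ι : Type*} {f : ι → EuclideanSpace ℂ (Fin d) → EuclideanSpace ℂ (Fin d)}
    (hf : ∀ i, AsympFix (f i)) (hfn : ∀ i x, ‖f i x‖ ≤ ‖x‖) (l : List ι) :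
    AsympFix (fun x => l.foldl (fun y i => f i y) x) := by
  induction l with
  | nil => exact asympFix_id
  | cons i l ih => exact ih.comp (hf i) (l.norm_foldl_le hfn) (hfn i)

end AsympFix

section relaxProj

variable {d : ℕ} (a : EuclideanSpace ℂ (Fin d))

theorem inner_sub_relaxProj_self (x : EuclideanSpace ℂ (Fin d)) (ω : ℝ) :
    ⟪x - relaxProj a ω x, x - relaxProj a ω x⟫_ℂ = ω * ⟪x - relaxProj a ω x, x⟫_ℂ := by
  rcases eq_or_ne a 0 with rfl | ha
  · simp [relaxProj]
  have hscale : (ω : ℂ) * (⟪a, x⟫_ℂ / (‖a‖ : ℂ) ^ 2) * (‖a‖ : ℂ) ^ 2 = ω * ⟪a, x⟫_ℂ := by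
    have : (‖a‖ : ℂ) ≠ 0 := by simpa using ha
    field_simp
  rw [relaxProj, sub_sub_cancel, inner_smul_left, inner_smul_left, inner_smul_right,
    inner_self_eq_norm_sq_to_K, RCLike.ofReal_eq_complex_ofReal, hscale]
  ring

theorem two_sub_mul_norm_sub_relaxProj_sq (x : EuclideanSpace ℂ (Fin d)) (ω : ℝ) :
    (2 - ω) * ‖x - relaxProj a ω x‖ ^ 2 = ω * (‖x‖ ^ 2 - ‖relaxProj a ω x‖ ^ 2) := by
  simpa only [sub_sub_cancel] using two_sub_mul_norm_sq_eq (inner_sub_relaxProj_self a x ω)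

theorem norm_relaxProj_le (x : EuclideanSpace ℂ (Fin d)) {ω : ℝ} (hω : ω ∈ Set.Ioo (0 : ℝ) 2) :
    ‖relaxProj a ω x‖ ≤ ‖x‖ := by
  have hdiff : 0 ≤ ω * (‖x‖ ^ 2 - ‖relaxProj a ω x‖ ^ 2) := by
    rw [← two_sub_mul_norm_sub_relaxProj_sq]
    exact mul_nonneg (by linarith [hω.2]) (sq_nonneg _)
  rw [← sq_le_sq₀ (norm_nonneg _) (norm_nonneg _)]
  linarith [nonneg_of_mul_nonneg_right hdiff hω.1]

theorem asympFix_relaxProj {ω : ℝ} (hω : ω ∈ Set.Ioo (0 : ℝ) 2) :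
    AsympFix (relaxProj a ω) := by
  have h2ω : 0 < 2 - ω := by linarith [hω.2]
  refine asympFix_of_norm_sub_sq_le (c := ω / (2 - ω)) (div_nonneg hω.1.le h2ω.le)
    fun x => le_of_eq ?_
  rw [div_mul_eq_mul_div, ← two_sub_mul_norm_sub_relaxProj_sq, mul_div_cancel_left₀ _ h2ω.ne']

end relaxProj

theorem stmt_4_general {d n : ℕ} (a : Fin n → EuclideanSpace ℂ (Fin d))
    (ω : Fin n → ℝ) (hω : ∀ i, ω i ∈ Set.Ioo (0 : ℝ) 2)
    (R : EuclideanSpace ℂ (Fin d) → EuclideanSpace ℂ (Fin d))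
    (hR : ∀ x, R x = (List.finRange n).foldl (fun y i => relaxProj (a i) (ω i) y) x)
    (C : EuclideanSpace ℂ (Fin d) →ₗ[ℂ] EuclideanSpace ℂ (Fin d))
    (hC : ∀ x, ‖C x‖ ≤ ‖x‖) (hCfix : AsympFix (⇑C)) :
    AsympFix (fun x => C (R x)) := by
  have hRfix : AsympFix R := by
    rw [funext hR]
    exact asympFix_foldl (fun i => asympFix_relaxProj _ (hω i))
      (fun i x => norm_relaxProj_le _ x (hω i)) _
  have hRn : ∀ x, ‖R x‖ ≤ ‖x‖ := fun x => by
    rw [hR]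
    exact List.norm_foldl_le (fun i x => norm_relaxProj_le _ x (hω i)) _ x
  exact hCfix.comp hRfix hC hRn

/-- if `R` is a composition of relaxed projections with parameters in `(0,2)` and
`C` is a linear contraction with the asymptotic-fixing property, then `C ∘ R` also has the
asymptotic-fixing property. -/
theorem stmt_4 {d n : ℕ} (a : Fin n → EuclideanSpace ℂ (Fin d)) (ha : ∀ i, a i ≠ 0)
    (ω : Fin n → ℝ) (hω : ∀ i, ω i ∈ Set.Ioo (0 : ℝ) 2)
    (R : EuclideanSpace ℂ (Fin d) → EuclideanSpace ℂ (Fin d))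
    (hR : ∀ x, R x = (List.finRange n).foldl (fun y i => relaxProj (a i) (ω i) y) x)
    (C : EuclideanSpace ℂ (Fin d) →ₗ[ℂ] EuclideanSpace ℂ (Fin d))
    (hC : ∀ x, ‖C x‖ ≤ ‖x‖) (hCfix : AsympFix (⇑C)) :
    AsympFix (fun x => C (R x)) :=
  stmt_4_general a ω hω R hR C hC hCfix
end

section
/- Let T_1,…,T_c be linear operators on ℂ^d, each satisfying ‖T_i x‖ ≤ ‖x‖ for all x and each having the asymptotic-fixing property, and let w_1,…,w_c > 0 with Σ_{i=1}^{c} w_i = 1. Then the convex combination T = Σ_{i=1}^{c} w_i T_i has the asymptotic-fixing property. -/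
/-- A convex combination `T = Σ_i w_i T_i` of linear contractions each having the
asymptotic-fixing property again has the asymptotic-fixing property. -/
theorem stmt_7 {d c : ℕ}
    (T : Fin c → (EuclideanSpace ℂ (Fin d) →ₗ[ℂ] EuclideanSpace ℂ (Fin d)))
    (hT : ∀ i x, ‖T i x‖ ≤ ‖x‖) (hfix : ∀ i, AsympFix (⇑(T i)))
    (w : Fin c → ℝ) (hw : ∀ i, 0 < w i) (hw1 : ∑ i, w i = 1) :
    AsympFix (fun x => ∑ i, w i • T i x) := by
  intro x hx hS
  simp only at hS
  -- bound on each T i x k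
  have hTb : ∀ i k, ‖T i (x k)‖ ≤ 1 := fun i k => (hT i (x k)).trans (hx k)
  -- key inequality
  have key : ∀ i k, ‖∑ j, w j • T j (x k)‖ ≤ w i * ‖T i (x k)‖ + (1 - w i) := by
    intro i k
    have h1 : ‖∑ j, w j • T j (x k)‖ ≤ ∑ j, w j * ‖T j (x k)‖ := by
      refine (norm_sum_le _ _).trans (le_of_eq ?_)
      refine Finset.sum_congr rfl fun j _ => ?_
      rw [norm_smul, Real.norm_eq_abs, abs_of_pos (hw j)]
    have h2 : ∑ j, w j * ‖T j (x k)‖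
        = w i * ‖T i (x k)‖ + ∑ j ∈ Finset.univ.erase i, w j * ‖T j (x k)‖ := by
      rw [← Finset.add_sum_erase _ _ (Finset.mem_univ i)]
    have h3 : ∑ j ∈ Finset.univ.erase i, w j * ‖T j (x k)‖ ≤ 1 - w i := by
      have : ∑ j ∈ Finset.univ.erase i, w j * ‖T j (x k)‖
          ≤ ∑ j ∈ Finset.univ.erase i, w j := by
        refine Finset.sum_le_sum fun j _ => ?_
        nlinarith [hTb j k, hw j]
      have h4 : ∑ j ∈ Finset.univ.erase i, w j = 1 - w i := by
        rw [← hw1, ← Finset.add_sum_erase _ _ (Finset.mem_univ i)]; ring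
      linarith
    linarith
  -- each ‖T i (x k)‖ → 1
  have hi : ∀ i, Filter.Tendsto (fun k => ‖T i (x k)‖) Filter.atTop (nhds 1) := by
    intro i
    have hlow : Filter.Tendsto
        (fun k => 1 - (1 - ‖∑ j, w j • T j (x k)‖) / w i) Filter.atTop (nhds 1) := by
      have h1 : Filter.Tendsto (fun k => (1 - ‖∑ j, w j • T j (x k)‖) / w i)
          Filter.atTop (nhds ((1 - 1) / w i)) :=
        (Filter.Tendsto.sub (tendsto_const_nhds (x := (1:ℝ))) hS).div_const (w i)
      have h := Filter.Tendsto.sub (tendsto_const_nhds (x := (1:ℝ))) h1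
      simpa using h
    refine tendsto_of_tendsto_of_tendsto_of_le_of_le hlow tendsto_const_nhds
      (fun k => ?_) (fun k => hTb i k)
    have hk := key i k
    rw [sub_le_iff_le_add, ← sub_le_iff_le_add', le_div_iff₀ (hw i)]
    nlinarith [hk]
  have hdiff : ∀ i, Filter.Tendsto (fun k => x k - T i (x k)) Filter.atTop (nhds 0) :=
    fun i => hfix i x hx (hi i)
  have heq : (fun k => x k - ∑ i, w i • T i (x k))
      = fun k => ∑ i, w i • (x k - T i (x k)) := by
    funext k
    simp only [smul_sub, Finset.sum_sub_distrib, ← Finset.sum_smul, hw1, one_smul]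
  simp only [heq]
  have := tendsto_finset_sum Finset.univ (fun i (_ : i ∈ Finset.univ) =>
    (hdiff i).const_smul (w i))
  simpa using this
end

section
/- Let T be a linear operator on ℂ^d such that ‖T x‖ ≤ ‖x‖ for all x, and such that ‖T x‖ = ‖x‖ implies T x = x. Then the powers T^k converge, as k → ∞, to the orthogonal projection onto the fixed-point subspace {x ∈ ℂ^d : T x = x} = ker(I − T); that is, for every y ∈ ℂ^d, T^k y converges to the orthogonal projection of y onto ker(I − T). -/
/-!
Let `K` be the fixed space of `T`. Since `T` is a contraction, a fixed point `x` of `T` satisfies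
`‖T† x‖ ≤ ‖x‖ = re ⟪T† x, x⟫`, so it is also fixed by the adjoint; hence `Kᗮ` is `T`-invariant.
On `Kᗮ` the operator shrinks every nonzero vector, so by compactness of the unit sphere its norm
there is `< 1` and `T ^ k → 0` on `Kᗮ`. Writing `y = p + q` with `p ∈ K`, `q ∈ Kᗮ` gives
`T ^ k y = p + T ^ k q → p`.
-/

open Filter Topology

theorem LinearMap.mem_ker_id_sub_iff {R M : Type*} [Ring R] [AddCommGroup M] [Module R M]
    (T : M →ₗ[R] M) {x : M} : x ∈ LinearMap.ker (LinearMap.id - T) ↔ T x = x := by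
  rw [LinearMap.mem_ker, LinearMap.sub_apply, LinearMap.id_apply, sub_eq_zero, eq_comm]

section Contraction

variable {𝕜 V F : Type*} [RCLike 𝕜] [NormedAddCommGroup V] [NormedSpace 𝕜 V]
  [FiniteDimensional 𝕜 V] [SeminormedAddCommGroup F] [NormedSpace 𝕜 F]

theorem ContinuousLinearMap.opNorm_lt_one_of_norm_apply_lt (f : V →L[𝕜] F)
    (hf : ∀ x, x ≠ 0 → ‖f x‖ < ‖x‖) : ‖f‖ < 1 := by
  have := FiniteDimensional.proper_rclike 𝕜 V
  let := NormedSpace.restrictScalars ℝ 𝕜 V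
  rcases subsingleton_or_nontrivial V with hV | hV
  · simp [f.opNorm_subsingleton]
  obtain ⟨x₀, hx₀, hmax⟩ := (isCompact_sphere (0 : V) 1).exists_isMaxOn
    (NormedSpace.sphere_nonempty.2 zero_le_one) (continuous_norm.comp f.continuous).continuousOn
  have hx₀_norm : ‖x₀‖ = 1 := mem_sphere_zero_iff_norm.1 hx₀
  calc ‖f‖ ≤ ‖f x₀‖ :=
        f.opNorm_le_of_unit_norm (norm_nonneg _) fun x hx => hmax (mem_sphere_zero_iff_norm.2 hx)
    _ < 1 := hx₀_norm ▸ hf x₀ (norm_ne_zero_iff.1 (by simp [hx₀_norm]))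

theorem LinearMap.tendsto_pow_apply_zero_of_norm_apply_lt (T : V →ₗ[𝕜] V) {W : Submodule 𝕜 V}
    (hW : ∀ x ∈ W, T x ∈ W) (hT : ∀ x ∈ W, x ≠ 0 → ‖T x‖ < ‖x‖) {v : V} (hv : v ∈ W) :
    Tendsto (fun k => (T ^ k) v) atTop (𝓝 0) := by
  set S := LinearMap.toContinuousLinearMap (T.restrict hW)
  have hS : ‖S‖ < 1 := S.opNorm_lt_one_of_norm_apply_lt fun x hx =>
    hT x x.2 (by simpa using hx)
  have hpow : Tendsto (fun k => S ^ k) atTop (𝓝 0) := tendsto_pow_atTop_nhds_zero_of_norm_lt_one hS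
  have happly := ((ContinuousLinearMap.apply 𝕜 W (⟨v, hv⟩ : W)).continuous.tendsto 0).comp hpow
  have hval := (continuous_subtype_val.tendsto _).comp happly
  simp only [Function.comp_def, map_zero, ContinuousLinearMap.apply_apply,
    ZeroMemClass.coe_zero] at hval
  convert hval using 2 with k
  rw [← ContinuousLinearMap.coe_coe, ContinuousLinearMap.toLinearMap_pow,
    LinearMap.coe_toContinuousLinearMap, Module.End.pow_restrict]
  rfl

end Contraction

section Adjoint

open RCLike InnerProductSpace

variable {𝕜 E : Type*} [RCLike 𝕜] [NormedAddCommGroup E] [InnerProductSpace 𝕜 E]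
  [FiniteDimensional 𝕜 E] {T : E →ₗ[𝕜] E}

theorem LinearMap.norm_adjoint_apply_le (hT : ∀ x, ‖T x‖ ≤ ‖x‖) (y : E) :
    ‖LinearMap.adjoint T y‖ ≤ ‖y‖ := by
  have h : ‖LinearMap.adjoint T y‖ ^ 2 ≤ ‖y‖ * ‖LinearMap.adjoint T y‖ :=
    calc ‖LinearMap.adjoint T y‖ ^ 2
        = re ⟪LinearMap.adjoint T y, LinearMap.adjoint T y⟫_𝕜 := (inner_self_eq_norm_sq _).symm
      _ = re ⟪y, T (LinearMap.adjoint T y)⟫_𝕜 := by rw [LinearMap.adjoint_inner_left]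
      _ ≤ ‖y‖ * ‖T (LinearMap.adjoint T y)‖ := re_inner_le_norm _ _
      _ ≤ ‖y‖ * ‖LinearMap.adjoint T y‖ := by gcongr; exact hT _
  nlinarith [norm_nonneg (LinearMap.adjoint T y), norm_nonneg y]

theorem LinearMap.adjoint_apply_eq_self_of_apply_eq_self (hT : ∀ x, ‖T x‖ ≤ ‖x‖) {x : E}
    (hx : T x = x) : LinearMap.adjoint T x = x :=
  eq_of_norm_le_re_inner_eq_norm_sq (T.norm_adjoint_apply_le hT x) <| by
    rw [LinearMap.adjoint_inner_left, hx, inner_self_eq_norm_sq]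

theorem LinearMap.apply_mem_orthogonal_ker_id_sub (hT : ∀ x, ‖T x‖ ≤ ‖x‖) :
    ∀ q ∈ (LinearMap.ker (LinearMap.id - T))ᗮ, T q ∈ (LinearMap.ker (LinearMap.id - T))ᗮ := by
  intro q hq u hu
  have hTu : LinearMap.adjoint T u = u :=
    T.adjoint_apply_eq_self_of_apply_eq_self hT (T.mem_ker_id_sub_iff.1 hu)
  rw [← LinearMap.adjoint_inner_left, hTu]
  exact hq u hu

end Adjoint

/-- If `T` is a linear operator on `ℂ^d` with `‖T x‖ ≤ ‖x‖` for all `x` and such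
that `‖T x‖ = ‖x‖` implies `T x = x`, then the powers `T^k` converge strongly to the orthogonal
projection onto the fixed-point subspace `ker(I - T)`. -/
theorem stmt_10 {d : ℕ} (T : EuclideanSpace ℂ (Fin d) →ₗ[ℂ] EuclideanSpace ℂ (Fin d))
    (hcon : ∀ x, ‖T x‖ ≤ ‖x‖) (hfix : ∀ x, ‖T x‖ = ‖x‖ → T x = x) :
    ∀ y : EuclideanSpace ℂ (Fin d),
      Filter.Tendsto (fun k => (T ^ k) y) Filter.atTop
        (nhds ((Submodule.orthogonalProjectionOnto (LinearMap.ker (LinearMap.id - T)) y :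
          EuclideanSpace ℂ (Fin d)))) := by
  intro y
  set K := LinearMap.ker (LinearMap.id - T)
  set p : EuclideanSpace ℂ (Fin d) := (K.orthogonalProjectionOnto y : EuclideanSpace ℂ (Fin d))
  have hTp : ∀ k, (T ^ k) p = p := fun k => by
    rw [Module.End.pow_apply]
    exact Function.iterate_fixed (T.mem_ker_id_sub_iff.1 (K.orthogonalProjectionOnto y).2) k
  have hshrink : ∀ q ∈ Kᗮ, q ≠ 0 → ‖T q‖ < ‖q‖ := fun q hq hq0 =>
    (hcon q).lt_of_ne fun h => hq0 <|
      Submodule.disjoint_def.1 K.orthogonal_disjoint q (T.mem_ker_id_sub_iff.2 (hfix q h)) hq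
  have hzero : Tendsto (fun k => (T ^ k) (y - p)) atTop (𝓝 0) :=
    T.tendsto_pow_apply_zero_of_norm_apply_lt (T.apply_mem_orthogonal_ker_id_sub hcon) hshrink
      (K.sub_starProjection_mem_orthogonal y)
  have hsplit : (fun k => (T ^ k) y) = fun k => p + (T ^ k) (y - p) := by
    funext k
    rw [map_sub, hTp k, add_sub_cancel]
  rw [hsplit]
  simpa using tendsto_const_nhds.add hzero
end

section
/- Let A be an m×d complex matrix with nonzero rows a_1*,…,a_m* and let b ∈ ℂ^m; suppose the system A x = b is consistent. For each ℓ = 1,…,t let w_ℓ > 0 with Σ_{ℓ=1}^{t} w_ℓ = 1 and let (v_{ℓ,1},…,v_{ℓ,n_ℓ}) be a list of row indices such that every index in {1,…,m} occurs in at least one list; let ω_v be a real relaxation parameter for each row index v. Define the affine maps Q_v x = x + ω_v((b_v − ⟨x, a_v⟩)/‖a_v‖²) a_v, the linear maps P_v x = x − ω_v(⟨x, a_v⟩/‖a_v‖²) a_v, and set Q x = Σ_{ℓ=1}^{t} w_ℓ (Q_{v_{ℓ,n_ℓ}} ∘ ⋯ ∘ Q_{v_{ℓ,1}})(x) and P x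 = Σ_{ℓ=1}^{t} w_ℓ (P_{v_{ℓ,n_ℓ}} ∘ ⋯ ∘ P_{v_{ℓ,1}})(x). Assume that ‖P x‖ ≤ ‖x‖ for all x ∈ ℂ^d and that ‖P x‖ = ‖x‖ implies A x = 0. Then for any initial vector x⁰ belonging to the range of A*, the iterates x^{n+1} = Q x^n converge to the unique solution of A x = b of minimal Euclidean norm. -/
/-!
Let `K` be the span of the rows `a v`. The minimal-norm solution `z` is the orthogonal projection
onto `K` of any solution. Since `z` solves every row, each relaxed step satisfies
`Q_v y = P_v (y - z) + z`, and as the weights sum to one, `Q x = P (x - z) + z`; hence the errors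
are `x^n - z = P^n (x^0 - z)`, which stay in the `P`-invariant subspace `K`. For `0 ≠ u ∈ K`,
equality `‖P u‖ = ‖u‖` would put `u` in `K ∩ Kᗮ = 0`, so `‖P u‖ < ‖u‖`; by compactness of the
unit sphere of `K` this makes `P` a strict contraction on `K`, and the errors decay geometrically.
-/

open Submodule Set Filter Topology
open scoped InnerProductSpace

theorem Submodule.norm_starProjection_lt {𝕜 E : Type*} [RCLike 𝕜] [NormedAddCommGroup E]
    [InnerProductSpace 𝕜 E] {K : Submodule 𝕜 E} [K.HasOrthogonalProjection] {y : E}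
    (hy : K.starProjection y ≠ y) : ‖K.starProjection y‖ < ‖y‖ :=
  (K.norm_starProjection_apply_le y).lt_of_ne fun h =>
    hy (starProjection_eq_self_iff.2 ((K.mem_iff_norm_starProjection y).2 h))

section MinimalNorm

variable {𝕜 E ι : Type*} [RCLike 𝕜] [NormedAddCommGroup E] [InnerProductSpace 𝕜 E] (a : ι → E)

theorem mem_orthogonal_span_range_iff {u : E} :
    u ∈ (span 𝕜 (range a))ᗮ ↔ ∀ v, ⟪a v, u⟫_𝕜 = 0 := by
  refine ⟨fun hu v => inner_right_of_mem_orthogonal (subset_span (mem_range_self v)) hu,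
    fun hu => (mem_orthogonal' _ _).2 fun x hx => ?_⟩
  have hker : span 𝕜 (range a) ≤ LinearMap.ker (innerₛₗ 𝕜 u) :=
    span_le.2 <| range_subset_iff.2 fun v => by simpa using inner_eq_zero_symm.1 (hu v)
  simpa using hker hx

variable [(span 𝕜 (range a)).HasOrthogonalProjection]

theorem inner_starProjection_span_range (x : E) (v : ι) :
    ⟪a v, (span 𝕜 (range a)).starProjection x⟫_𝕜 = ⟪a v, x⟫_𝕜 := by
  have h := (mem_orthogonal_span_range_iff a).1
    (sub_starProjection_mem_orthogonal (K := span 𝕜 (range a)) x) v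
  rwa [inner_sub_right, sub_eq_zero, eq_comm] at h

theorem starProjection_span_range_eq {y z : E} (hz : z ∈ span 𝕜 (range a))
    (h : ∀ v, ⟪a v, y⟫_𝕜 = ⟪a v, z⟫_𝕜) : (span 𝕜 (range a)).starProjection y = z :=
  eq_starProjection_of_mem_orthogonal hz <|
    (mem_orthogonal_span_range_iff a).2 fun v => by rw [inner_sub_right, h v, sub_self]

theorem exists_mem_span_range_minimal_solution (b : ι → 𝕜)
    (hb : ∃ x, ∀ v, ⟪a v, x⟫_𝕜 = b v) :
    ∃ z ∈ span 𝕜 (range a), (∀ v, ⟪a v, z⟫_𝕜 = b v) ∧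
      (∀ y, (∀ v, ⟪a v, y⟫_𝕜 = b v) → ‖z‖ ≤ ‖y‖) ∧
      (∀ y, (∀ v, ⟪a v, y⟫_𝕜 = b v) → y ≠ z → ‖z‖ < ‖y‖) := by
  obtain ⟨x, hx⟩ := hb
  set K := span 𝕜 (range a)
  have hsol v : ⟪a v, K.starProjection x⟫_𝕜 = b v :=
    (inner_starProjection_span_range a x v).trans (hx v)
  have hproj y (hy : ∀ v, ⟪a v, y⟫_𝕜 = b v) : K.starProjection y = K.starProjection x :=
    starProjection_span_range_eq a (K.starProjection_apply_mem x) fun v =>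
      (hy v).trans (hsol v).symm
  refine ⟨K.starProjection x, K.starProjection_apply_mem x, hsol, fun y hy => ?_,
    fun y hy hne => ?_⟩
  · exact hproj y hy ▸ K.norm_starProjection_apply_le y
  · rw [← hproj y hy] at hne ⊢
    exact norm_starProjection_lt (Ne.symm hne)

end MinimalNorm

section Kaczmarz

variable {𝕜 E : Type*} [RCLike 𝕜] [NormedAddCommGroup E] [InnerProductSpace 𝕜 E]

def kaczmarzStep (a : E) (c : 𝕜) : E →ₗ[𝕜] E where
  toFun y := y - (c * (⟪a, y⟫_𝕜 / (‖a‖ : 𝕜) ^ 2)) • a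
  map_add' x y := by simp only [inner_add_right, add_div, mul_add, add_smul]; abel
  map_smul' r x := by
    simp only [inner_smul_right, smul_sub, smul_smul, RingHom.id_apply]
    congr 2
    ring

theorem kaczmarzStep_apply (a : E) (c : 𝕜) (y : E) :
    kaczmarzStep a c y = y - (c * (⟪a, y⟫_𝕜 / (‖a‖ : 𝕜) ^ 2)) • a := rfl

theorem kaczmarzStep_mem {K : Submodule 𝕜 E} {a y : E} (ha : a ∈ K) (hy : y ∈ K) (c : 𝕜) :
    kaczmarzStep a c y ∈ K :=
  K.sub_mem hy (K.smul_mem _ ha)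

theorem add_smul_eq_kaczmarzStep {a z : E} {β : 𝕜} (hz : ⟪a, z⟫_𝕜 = β) (c : 𝕜) (y : E) :
    y + (c * ((β - ⟪a, y⟫_𝕜) / (‖a‖ : 𝕜) ^ 2)) • a = kaczmarzStep a c (y - z) + z := by
  have hcoef : c * ((β - ⟪a, y⟫_𝕜) / (‖a‖ : 𝕜) ^ 2) =
      -(c * (⟪a, y - z⟫_𝕜 / (‖a‖ : 𝕜) ^ 2)) := by
    rw [inner_sub_right, hz]; ring
  rw [kaczmarzStep_apply, hcoef, neg_smul]
  abel

end Kaczmarz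

theorem List.foldl_apply_eq_prod_reverse {R M ι : Type*} [Semiring R] [AddCommMonoid M]
    [Module R M] (L : ι → Module.End R M) (l : List ι) (x : M) :
    l.foldl (fun y v => L v y) x = (l.map L).reverse.prod x := by
  induction l generalizing x with
  | nil => rfl
  | cons v l ih => simp [ih, List.prod_append, Module.End.mul_apply]

section Pooled

variable {𝕜 E ι κ : Type*} [RCLike 𝕜] [NormedAddCommGroup E] [InnerProductSpace 𝕜 E]
  [Module ℝ E] [IsScalarTower ℝ 𝕜 E] [Fintype κ]

/-- `((paths ℓ).map L).reverse.prod` is `L vₙ ∘ ⋯ ∘ L v₁`: a path is traversed from its head. -/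
def pooledKaczmarz (a : ι → E) (ω : ι → 𝕜) (w : κ → ℝ) (paths : κ → List ι) : Module.End 𝕜 E :=
  ∑ ℓ, w ℓ • ((paths ℓ).map fun v => kaczmarzStep (a v) (ω v)).reverse.prod

variable (a : ι → E) (ω : ι → 𝕜) (w : κ → ℝ) (paths : κ → List ι)

theorem pooledKaczmarz_apply (x : E) :
    pooledKaczmarz a ω w paths x = ∑ ℓ, w ℓ • (paths ℓ).foldl
      (fun y v => y - (ω v * (⟪a v, y⟫_𝕜 / (‖a v‖ : 𝕜) ^ 2)) • a v) x := by
  simp only [pooledKaczmarz, LinearMap.coe_sum, Finset.sum_apply, LinearMap.smul_apply,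
    ← List.foldl_apply_eq_prod_reverse]
  rfl

theorem pooledKaczmarz_mem {K : Submodule 𝕜 E} (ha : ∀ v, a v ∈ K) {x : E} (hx : x ∈ K) :
    pooledKaczmarz a ω w paths x ∈ K := by
  have hfold (l : List ι) : ∀ y ∈ K, l.foldl (fun y v => kaczmarzStep (a v) (ω v) y) y ∈ K := by
    induction l with
    | nil => exact fun y hy => hy
    | cons v l ih => exact fun y hy => ih _ (kaczmarzStep_mem (ha v) hy _)
  rw [pooledKaczmarz_apply]
  exact K.sum_mem fun ℓ _ => K.smul_of_tower_mem _ (hfold _ x hx)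

theorem sum_smul_foldl_eq_pooledKaczmarz {b : ι → 𝕜} {z : E} (hz : ∀ v, ⟪a v, z⟫_𝕜 = b v)
    (hw : ∑ ℓ, w ℓ = 1) (x : E) :
    ∑ ℓ, w ℓ • (paths ℓ).foldl
      (fun y v => y + (ω v * ((b v - ⟪a v, y⟫_𝕜) / (‖a v‖ : 𝕜) ^ 2)) • a v) x =
      pooledKaczmarz a ω w paths (x - z) + z := by
  have hfold (l : List ι) : l.foldl
      (fun y v => y + (ω v * ((b v - ⟪a v, y⟫_𝕜) / (‖a v‖ : 𝕜) ^ 2)) • a v) x =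
      l.foldl (fun y v => kaczmarzStep (a v) (ω v) y) (x - z) + z := by
    rw [← List.foldl_hom (· + z) fun y v => ?_, sub_add_cancel]
    rw [add_smul_eq_kaczmarzStep (hz v), add_sub_cancel_right]
  simp only [hfold, smul_add, Finset.sum_add_distrib, ← Finset.sum_smul, hw, one_smul,
    pooledKaczmarz, LinearMap.coe_sum, Finset.sum_apply, LinearMap.smul_apply,
    List.foldl_apply_eq_prod_reverse]

end Pooled

theorem LinearMap.norm_toContinuousLinearMap_lt_one {𝕜 F G : Type*} [RCLike 𝕜]
    [NormedAddCommGroup F] [NormedSpace 𝕜 F] [FiniteDimensional 𝕜 F]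
    [NormedAddCommGroup G] [NormedSpace 𝕜 G] {T : F →ₗ[𝕜] G}
    (hT : ∀ u, u ≠ 0 → ‖T u‖ < ‖u‖) : ‖LinearMap.toContinuousLinearMap T‖ < 1 := by
  have := FiniteDimensional.proper_rclike 𝕜 F
  rcases subsingleton_or_nontrivial F with _ | _
  · simp [ContinuousLinearMap.opNorm_subsingleton]
  obtain ⟨u₀, hu₀, hmax⟩ := (isCompact_sphere (0 : F) 1).exists_isMaxOn
    (nonempty_coe_sort.1 (NormedSpace.sphere_nonempty_rclike 𝕜 zero_le_one))
    T.continuous_of_finiteDimensional.norm.continuousOn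
  have hu₀' : ‖u₀‖ = 1 := mem_sphere_zero_iff_norm.1 hu₀
  calc ‖LinearMap.toContinuousLinearMap T‖ ≤ ‖T u₀‖ :=
        ContinuousLinearMap.opNorm_le_of_unit_norm (norm_nonneg _) fun u hu =>
          hmax (mem_sphere_zero_iff_norm.2 hu)
    _ < 1 := hu₀' ▸ hT u₀ (norm_ne_zero_iff.1 (by simp [hu₀']))

theorem tendsto_pow_apply_nhds_zero {𝕜 E : Type*} [RCLike 𝕜] [NormedAddCommGroup E]
    [NormedSpace 𝕜 E] [FiniteDimensional 𝕜 E] {T : Module.End 𝕜 E} {K : Submodule 𝕜 E}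
    (hK : ∀ u ∈ K, T u ∈ K) (hT : ∀ u ∈ K, u ≠ 0 → ‖T u‖ < ‖u‖) {x : E} (hx : x ∈ K) :
    Tendsto (fun n => (T ^ n) x) atTop (𝓝 0) := by
  set r := ‖LinearMap.toContinuousLinearMap (T.domRestrict K)‖
  have hr : r < 1 := LinearMap.norm_toContinuousLinearMap_lt_one fun u hu =>
    hT u u.2 (by simpa using hu)
  have hstep (u : E) (hu : u ∈ K) : ‖T u‖ ≤ r * ‖u‖ :=
    (LinearMap.toContinuousLinearMap (T.domRestrict K)).le_opNorm ⟨u, hu⟩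
  have hmem (n : ℕ) : (T ^ n) x ∈ K := by
    induction n with
    | zero => exact hx
    | succ n ih => rw [pow_succ', Module.End.mul_apply]; exact hK _ ih
  have hbound (n : ℕ) : ‖(T ^ n) x‖ ≤ r ^ n * ‖x‖ := by
    refine le_geom (u := fun n => ‖(T ^ n) x‖) (norm_nonneg _) n fun k _ => ?_
    simp only [pow_succ', Module.End.mul_apply]
    exact hstep _ (hmem k)
  refine squeeze_zero_norm hbound ?_
  simpa using (tendsto_pow_atTop_nhds_zero_of_lt_one (norm_nonneg _) hr).mul_const ‖x‖

theorem stmt_11_general {d m t : ℕ} (a : Fin m → EuclideanSpace ℂ (Fin d))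
    (b : Fin m → ℂ) (hconsistent : ∃ x, ∀ v, (inner ℂ (a v) x : ℂ) = b v)
    (w : Fin t → ℝ) (hw1 : ∑ ℓ, w ℓ = 1)
    (paths : Fin t → List (Fin m))
    (ω : Fin m → ℝ)
    (Q P : EuclideanSpace ℂ (Fin d) → EuclideanSpace ℂ (Fin d))
    (hQ : ∀ x, Q x = ∑ ℓ, w ℓ • (paths ℓ).foldl
      (fun y v => y + ((ω v : ℂ) * ((b v - (inner ℂ (a v) y : ℂ)) / (‖a v‖ : ℂ) ^ 2)) • a v) x)
    (hP : ∀ x, P x = ∑ ℓ, w ℓ • (paths ℓ).foldl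
      (fun y v => y - ((ω v : ℂ) * ((inner ℂ (a v) y : ℂ) / (‖a v‖ : ℂ) ^ 2)) • a v) x)
    (hPcon : ∀ x, ‖P x‖ ≤ ‖x‖)
    (hPstrict : ∀ x, ‖P x‖ = ‖x‖ → ∀ v, (inner ℂ (a v) x : ℂ) = 0)
    (x0 : EuclideanSpace ℂ (Fin d)) (hx0 : x0 ∈ Submodule.span ℂ (Set.range a))
    (xseq : ℕ → EuclideanSpace ℂ (Fin d)) (hinit : xseq 0 = x0)
    (hrec : ∀ n, xseq (n + 1) = Q (xseq n)) :
    ∃ z : EuclideanSpace ℂ (Fin d),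
      (∀ v, (inner ℂ (a v) z : ℂ) = b v) ∧
      (∀ y, (∀ v, (inner ℂ (a v) y : ℂ) = b v) → ‖z‖ ≤ ‖y‖) ∧
      (∀ y, (∀ v, (inner ℂ (a v) y : ℂ) = b v) → y ≠ z → ‖z‖ < ‖y‖) ∧
      Filter.Tendsto xseq Filter.atTop (nhds z) := by
  obtain ⟨z, hzK, hsol, hmin, hmin_strict⟩ :=
    exists_mem_span_range_minimal_solution a b hconsistent
  set K := span ℂ (range a)
  set T := pooledKaczmarz a (fun v => (ω v : ℂ)) w paths
  have hPT x : P x = T x := (hP x).trans (pooledKaczmarz_apply _ _ _ _ x).symm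
  have hQT x : Q x = T (x - z) + z :=
    (hQ x).trans (sum_smul_foldl_eq_pooledKaczmarz _ _ _ _ hsol hw1 x)
  have hTK u (hu : u ∈ K) : T u ∈ K :=
    pooledKaczmarz_mem _ _ _ _ (fun v => subset_span (mem_range_self v)) hu
  have hTlt u (hu : u ∈ K) (hu0 : u ≠ 0) : ‖T u‖ < ‖u‖ := by
    refine (hPT u ▸ hPcon u).lt_of_ne fun heq => hu0 ?_
    have hperp : u ∈ Kᗮ := (mem_orthogonal_span_range_iff a).2 (hPstrict u (hPT u ▸ heq))
    simpa using K.inf_orthogonal_eq_bot.le ⟨hu, hperp⟩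
  have hiter n : xseq n = (T ^ n) (x0 - z) + z := by
    induction n with
    | zero => simp [hinit]
    | succ n ih => rw [hrec, hQT, ih, add_sub_cancel_right, pow_succ', Module.End.mul_apply]
  refine ⟨z, hsol, hmin, hmin_strict, ?_⟩
  simpa only [← hiter, zero_add] using
    (tendsto_pow_apply_nhds_zero hTK hTlt (K.sub_mem hx0 hzK)).add_const z

/-- For a consistent system with rows `a_v*` and right-hand side `b`, the
distributed Kaczmarz iteration `x^{n+1} = Q x^n` (dispersion along lists of row indices covering
all rows, followed by weighted pooling), under the hypotheses that the associated homogeneous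
operator `P` is a contraction and that `‖P x‖ = ‖x‖` forces `A x = 0`, converges to the unique
minimal-norm solution of `A x = b` whenever the initial vector lies in the range of `A*`
(= span of the `a_v`). -/
theorem stmt_11 {d m t : ℕ} (a : Fin m → EuclideanSpace ℂ (Fin d)) (ha : ∀ v, a v ≠ 0)
    (b : Fin m → ℂ) (hconsistent : ∃ x, ∀ v, (inner ℂ (a v) x : ℂ) = b v)
    (w : Fin t → ℝ) (hw : ∀ ℓ, 0 < w ℓ) (hw1 : ∑ ℓ, w ℓ = 1)
    (paths : Fin t → List (Fin m)) (hcover : ∀ j : Fin m, ∃ ℓ, j ∈ paths ℓ)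
    (ω : Fin m → ℝ)
    (Q P : EuclideanSpace ℂ (Fin d) → EuclideanSpace ℂ (Fin d))
    (hQ : ∀ x, Q x = ∑ ℓ, w ℓ • (paths ℓ).foldl
      (fun y v => y + ((ω v : ℂ) * ((b v - (inner ℂ (a v) y : ℂ)) / (‖a v‖ : ℂ) ^ 2)) • a v) x)
    (hP : ∀ x, P x = ∑ ℓ, w ℓ • (paths ℓ).foldl
      (fun y v => y - ((ω v : ℂ) * ((inner ℂ (a v) y : ℂ) / (‖a v‖ : ℂ) ^ 2)) • a v) x)
    (hPcon : ∀ x, ‖P x‖ ≤ ‖x‖)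
    (hPstrict : ∀ x, ‖P x‖ = ‖x‖ → ∀ v, (inner ℂ (a v) x : ℂ) = 0)
    (x0 : EuclideanSpace ℂ (Fin d)) (hx0 : x0 ∈ Submodule.span ℂ (Set.range a))
    (xseq : ℕ → EuclideanSpace ℂ (Fin d)) (hinit : xseq 0 = x0)
    (hrec : ∀ n, xseq (n + 1) = Q (xseq n)) :
    ∃ z : EuclideanSpace ℂ (Fin d),
      (∀ v, (inner ℂ (a v) z : ℂ) = b v) ∧
      (∀ y, (∀ v, (inner ℂ (a v) y : ℂ) = b v) → ‖z‖ ≤ ‖y‖) ∧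
      (∀ y, (∀ v, (inner ℂ (a v) y : ℂ) = b v) → y ≠ z → ‖z‖ < ‖y‖) ∧
      Filter.Tendsto xseq Filter.atTop (nhds z) :=
  stmt_11_general a b hconsistent w hw1 paths ω Q P hQ hP hPcon hPstrict x0 hx0 xseq hinit hrec
end

section
/- Let M be a subspace of ℂ^d and let T be a linear operator on ℂ^d such that ‖T x‖ ≤ ‖x‖ for all x, T x = x for every x ∈ M⊥, T maps M into M, and ‖T x‖ = ‖x‖ implies x ∈ M⊥. Suppose T x = λ x for some nonzero x ∈ ℂ^d and λ ∈ ℂ. Then either λ = 1 or |λ| < 1; moreover, λ = 1 if and only if x ∈ M⊥, and |λ| < 1 if and only if x ∈ M. -/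
/-! Write `x = m + p` with `m ∈ M`, `p ∈ Mᗮ`. Since `T` fixes `p` and preserves `M`, the equation
`T x = λ x` splits as `T m - λ m = (λ - 1) p ∈ M ⊓ Mᗮ = 0`, so an eigenvector with `λ ≠ 1` lies
in `M`. Contractivity gives `|λ| ≤ 1`, and `|λ| = 1` means `‖T x‖ = ‖x‖`, which puts `x` in
`Mᗮ`, where `T` is the identity, so `λ = 1`. -/

lemma norm_le_one_of_apply_eq_smul {𝕜 E : Type*} [NormedField 𝕜] [SeminormedAddCommGroup E]
    [NormedSpace 𝕜 E] {T : E → E} (hcon : ∀ x, ‖T x‖ ≤ ‖x‖) {x : E} (hx : ‖x‖ ≠ 0) {lam : 𝕜}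
    (hlam : T x = lam • x) : ‖lam‖ ≤ 1 := by
  have h := hcon x
  rw [hlam, norm_smul] at h
  exact le_of_mul_le_mul_right (by simpa using h) (lt_of_le_of_ne (norm_nonneg x) hx.symm)

lemma eq_one_of_apply_eq_smul_of_apply_eq_self {K V : Type*} [DivisionRing K] [AddCommGroup V]
    [Module K V] {T : V → V} {x : V} (hx : x ≠ 0) {lam : K}
    (hlam : T x = lam • x) (hfix : T x = x) : lam = 1 :=
  smul_left_injective K hx (show lam • x = (1 : K) • x by rw [← hlam, hfix, one_smul])

lemma mem_of_apply_eq_smul_of_ne_one {K V : Type*} [Field K] [AddCommGroup V] [Module K V]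
    {M N : Submodule K V} (hMN : IsCompl M N) {T : V →ₗ[K] V} (hfix : ∀ x ∈ N, T x = x)
    (hinv : ∀ x ∈ M, T x ∈ M) {x : V} {lam : K} (hlam : T x = lam • x) (hne : lam ≠ 1) :
    x ∈ M := by
  obtain ⟨m, hm, p, hp, rfl⟩ := Submodule.mem_sup.mp (hMN.sup_eq_top ▸ Submodule.mem_top (x := x))
  have hsplit : T m - lam • m = (lam - 1) • p := by
    rw [map_add, hfix p hp, smul_add] at hlam
    linear_combination (norm := module) hlam
  have hpM : (lam - 1) • p ∈ M := hsplit ▸ M.sub_mem (hinv m hm) (M.smul_mem lam hm)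
  have hp0 : (lam - 1) • p = 0 :=
    Submodule.disjoint_def.mp hMN.disjoint _ hpM (N.smul_mem _ hp)
  rw [(smul_eq_zero.mp hp0).resolve_left (sub_ne_zero.mpr hne), add_zero]
  exact hm

/-- Let `T` be a linear contraction on `ℂ^d` fixing `Mᗮ`, leaving `M` invariant,
and such that `‖T x‖ = ‖x‖` implies `x ∈ Mᗮ`.  If `T x = λ x` with `x ≠ 0`, then `λ = 1` or
`|λ| < 1`; moreover `λ = 1 ↔ x ∈ Mᗮ` and `|λ| < 1 ↔ x ∈ M`. -/
theorem stmt_12 {d : ℕ} (M : Submodule ℂ (EuclideanSpace ℂ (Fin d)))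
    (T : EuclideanSpace ℂ (Fin d) →ₗ[ℂ] EuclideanSpace ℂ (Fin d))
    (hcon : ∀ x, ‖T x‖ ≤ ‖x‖)
    (hfix : ∀ x ∈ Mᗮ, T x = x)
    (hinv : ∀ x ∈ M, T x ∈ M)
    (hstrict : ∀ x, ‖T x‖ = ‖x‖ → x ∈ Mᗮ)
    (x : EuclideanSpace ℂ (Fin d)) (hx : x ≠ 0) (lam : ℂ) (hlam : T x = lam • x) :
    (lam = 1 ∨ ‖lam‖ < 1) ∧ (lam = 1 ↔ x ∈ Mᗮ) ∧ (‖lam‖ < 1 ↔ x ∈ M) := by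
  have hone : lam = 1 ↔ x ∈ Mᗮ :=
    ⟨fun h => hstrict x (by rw [hlam, h, one_smul]),
      fun h => eq_one_of_apply_eq_smul_of_apply_eq_self hx hlam (hfix x h)⟩
  have hdich : lam = 1 ∨ ‖lam‖ < 1 := by
    rcases (norm_le_one_of_apply_eq_smul hcon (norm_ne_zero_iff.mpr hx) hlam).lt_or_eq with h | h
    · exact Or.inr h
    · exact Or.inl (hone.mpr (hstrict x (by rw [hlam, norm_smul, h, one_mul])))
  refine ⟨hdich, hone, fun hlt => ?_, fun hxM => hdich.resolve_left fun h => ?_⟩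
  · refine mem_of_apply_eq_smul_of_ne_one M.isCompl_orthogonal hfix hinv hlam ?_
    rintro rfl
    simp at hlt
  · exact hx (Submodule.disjoint_def.mp M.isCompl_orthogonal.disjoint x hxM (hone.mp h))
end

section
/- Let 𝒜 be a p×d complex matrix, b ∈ ℂ^p, let D, W, Ω₁ be p×p diagonal matrices with strictly positive diagonal entries, and let L be a p×p strictly lower-triangular complex matrix (so that D + sΩ₁L is invertible for every s ≥ 0). Then the operator 𝒜*D^{-1}WΩ₁𝒜 restricted to M := range(𝒜*) is a bijection of M, and the unique y_M ∈ M with 𝒜*D^{-1}WΩ₁𝒜 y_M = 𝒜*D^{-1}WΩ₁ b is the unique minimizer over M of the weighted least-squares functional x ↦ ⟨D^{-1}WΩ₁(b − 𝒜x), b − 𝒜x⟩. Moreover, if for each s ∈ (0,1] the vector y(s) ∈ M satisfies 𝒜*(D + sΩ₁L)^{-1}WΩ₁𝒜 y(s) = 𝒜*(D + sΩ₁L)^{-1}WΩ₁ b, then y(s) converges to y_M as s → 0⁺. -/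
/-!
Put `B = D⁻¹WΩ₁`, a positive definite diagonal matrix. If `x ∈ M = range 𝒜ᴴ` and `𝒜ᴴB𝒜x = 0`,
then `⟨B𝒜x, 𝒜x⟩ = 0`, so `𝒜x = 0`, and `range 𝒜ᴴ ∩ ker 𝒜 = 0` forces `x = 0`; an injective endomorphism of
the finite-dimensional space `M` is bijective. The solution `y_M` of the normal equations makes the
residual `b - 𝒜y_M` `B`-orthogonal to `range 𝒜`, whence the Pythagorean identity
`F x = F y_M + ⟨B𝒜(x - y_M), 𝒜(x - y_M)⟩`.

`D + sΩ₁L` is lower triangular with diagonal `D`, so it is invertible and its inverse is continuous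
in `s`. Hence the operators `𝒜ᴴ(D + sΩ₁L)⁻¹WΩ₁𝒜` restricted to `M` depend continuously on `s` and
are invertible at `s = 0`, and continuity of inversion in the Banach algebra of operators on `M`
gives `y(s) → y_M`.
-/

open scoped Matrix ComplexOrder
open Filter Topology Set

theorem Submodule.bijOn_of_mapsTo_of_injOn {K E : Type*} [Field K] [AddCommGroup E] [Module K E]
    [FiniteDimensional K E] {f : E →ₗ[K] E} {V : Submodule K E} (hmaps : MapsTo f V V)
    (hinj : InjOn f V) : BijOn f V V := by
  have hinj' : Function.Injective (f.restrict hmaps) := fun x y hxy =>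
    Subtype.ext (hinj x.2 y.2 (congrArg Subtype.val hxy))
  exact ⟨hmaps, hinj, hmaps.restrict_surjective_iff.1 (LinearMap.injective_iff_surjective.1 hinj')⟩

theorem Submodule.tendsto_of_eventually_apply_eq {α 𝕜 E : Type*} [NontriviallyNormedField 𝕜]
    [NormedAddCommGroup E] [NormedSpace 𝕜 E] {V : Submodule 𝕜 E} [CompleteSpace V]
    {l : Filter α} {T : α → V →L[𝕜] V} {T₀ : V →L[𝕜] V} {r : α → V} {y : α → E} {y₀ : V}
    (hT : Tendsto T l (𝓝 T₀)) (hT₀ : IsUnit T₀) (hr : Tendsto r l (𝓝 (T₀ y₀)))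
    (hy : ∀ᶠ a in l, ∃ h : y a ∈ V, T a ⟨y a, h⟩ = r a) : Tendsto y l (𝓝 (y₀ : E)) := by
  have inverse_apply_apply {S : V →L[𝕜] V} (hS : IsUnit S) (v : V) : Ring.inverse S (S v) = v :=
    DFunLike.congr_fun (Ring.inverse_mul_cancel S hS) v
  have hinv : Tendsto (fun a => Ring.inverse (T a)) l (𝓝 (Ring.inverse T₀)) := by
    obtain ⟨u, rfl⟩ := hT₀
    exact (NormedRing.inverse_continuousAt u).tendsto.comp hT
  have hsol : Tendsto (fun a => Ring.inverse (T a) (r a)) l (𝓝 y₀) := by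
    rw [← inverse_apply_apply hT₀ y₀]
    exact (isBoundedBilinearMap_apply.continuous.tendsto _).comp (hinv.prodMk_nhds hr)
  refine (continuous_subtype_val.tendsto y₀ |>.comp hsol).congr' ?_
  filter_upwards [hT.eventually (Units.isOpen.mem_nhds hT₀), hy] with a hunit ⟨hmem, heq⟩
  simp only [Function.comp_apply, ← heq, inverse_apply_apply hunit]

namespace Matrix

section Algebra

variable {R : Type*} [CommRing R] {m n : Type*} [Fintype m] [Fintype n]

theorem mul_mulVec_mem_range_mulVecLin {k l : Type*} [Fintype k] (M : Matrix l m R)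
    (K : Matrix m k R) (x : k → R) :
    (M * K) *ᵥ x ∈ LinearMap.range M.mulVecLin :=
  ⟨K *ᵥ x, mulVec_mulVec x M K⟩

theorem isUnit_diagonal_add_of_strictLower [LinearOrder m] [DecidableEq m] {d : m → R}
    (hd : ∀ i, IsUnit (d i)) {C : Matrix m m R} (hC : ∀ i j, i ≤ j → C i j = 0) :
    IsUnit (diagonal d + C) := by
  have hlower : (diagonal d + C).IsLowerTriangular := fun i j (hij : i < j) => by
    simp [diagonal_apply_ne _ hij.ne, hC i j hij.le]
  rw [isUnit_iff_isUnit_det, det_of_isLowerTriangular _ hlower]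
  exact IsUnit.prod_univ_iff.2 fun i => by simpa [hC] using hd i

variable [StarRing R]

theorem star_residual_dotProduct_mulVec_residual_eq_add {B : Matrix m m R} (hB : B.IsHermitian)
    (A : Matrix m n R) {b : m → R} {y : n → R} (hy : (Aᴴ * B * A) *ᵥ y = (Aᴴ * B) *ᵥ b)
    (x : n → R) :
    star (b - A *ᵥ x) ⬝ᵥ (B *ᵥ (b - A *ᵥ x)) =
      star (b - A *ᵥ y) ⬝ᵥ (B *ᵥ (b - A *ᵥ y)) +
        star (A *ᵥ (x - y)) ⬝ᵥ (B *ᵥ (A *ᵥ (x - y))) := by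
  set r := b - A *ᵥ y
  set h := x - y
  have hr : (Aᴴ * B) *ᵥ r = 0 := by rw [mulVec_sub, mulVec_mulVec, ← hy, sub_self]
  have hcross : star (A *ᵥ h) ⬝ᵥ (B *ᵥ r) = 0 := by
    rw [star_mulVec, ← dotProduct_mulVec, mulVec_mulVec, hr, dotProduct_zero]
  have hcross' : star r ⬝ᵥ (B *ᵥ (A *ᵥ h)) = 0 := by
    rw [star_dotProduct, star_mulVec, ← dotProduct_mulVec, hB.eq, hcross, star_zero]
  have hsplit : b - A *ᵥ x = r - A *ᵥ h := by simp only [r, h, mulVec_sub]; abel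
  simp only [hsplit, star_sub, mulVec_sub, sub_dotProduct, dotProduct_sub, hcross, hcross']
  ring

variable [PartialOrder R] [StarOrderedRing R] [NoZeroDivisors R]

theorem eq_zero_of_mem_range_conjTranspose_of_mulVec_eq_zero (A : Matrix m n R) {x : n → R}
    (hx : x ∈ LinearMap.range Aᴴ.mulVecLin) (hAx : A *ᵥ x = 0) : x = 0 := by
  obtain ⟨t, rfl⟩ := hx
  rw [mulVecLin_apply] at hAx ⊢
  rw [← dotProduct_star_self_eq_zero, dotProduct_mulVec, vecMul_conjTranspose, star_star, hAx,
    star_zero, zero_dotProduct]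

omit [StarOrderedRing R] [NoZeroDivisors R] in
theorem PosDef.eq_zero_of_dotProduct_mulVec_self_eq_zero {B : Matrix m m R} (hB : B.PosDef)
    {v : m → R} (hv : star v ⬝ᵥ (B *ᵥ v) = 0) : v = 0 := by
  by_contra hne
  exact (hB.dotProduct_mulVec_pos hne).ne' hv

theorem injOn_conjTranspose_mul_mul_mulVec {B : Matrix m m R} (hB : B.PosDef) (A : Matrix m n R) :
    InjOn ((Aᴴ * B * A) *ᵥ ·) (LinearMap.range Aᴴ.mulVecLin) := by
  intro x hx z hz hxz
  have hker : (Aᴴ * B * A) *ᵥ (x - z) = 0 := by rw [mulVec_sub, sub_eq_zero]; exact hxz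
  rw [← sub_eq_zero]
  refine A.eq_zero_of_mem_range_conjTranspose_of_mulVec_eq_zero (sub_mem hx hz) ?_
  refine hB.eq_zero_of_dotProduct_mulVec_self_eq_zero ?_
  rw [star_mulVec, ← dotProduct_mulVec, mulVec_mulVec, mulVec_mulVec, hker, dotProduct_zero]

end Algebra

variable {𝕜 : Type*} [RCLike 𝕜] {m n : Type*} [Fintype m] [Fintype n]

theorem bijOn_conjTranspose_mul_mul_mulVec {B : Matrix m m 𝕜} (hB : B.PosDef) (A : Matrix m n 𝕜) :
    BijOn ((Aᴴ * B * A) *ᵥ ·) (LinearMap.range Aᴴ.mulVecLin) (LinearMap.range Aᴴ.mulVecLin) :=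
  Submodule.bijOn_of_mapsTo_of_injOn (f := (Aᴴ * B * A).mulVecLin)
    (fun x _ => by
      rw [SetLike.mem_coe, mulVecLin_apply, Matrix.mul_assoc]
      exact mul_mulVec_mem_range_mulVecLin Aᴴ (B * A) x)
    (injOn_conjTranspose_mul_mul_mulVec hB A)

theorem inner_equiv_symm_mulVec_of_isHermitian {B : Matrix m m 𝕜} (hB : B.IsHermitian)
    (r : m → 𝕜) :
    inner 𝕜 ((WithLp.equiv 2 (m → 𝕜)).symm (B *ᵥ r)) ((WithLp.equiv 2 (m → 𝕜)).symm r) =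
      star r ⬝ᵥ (B *ᵥ r) := by
  rw [WithLp.equiv_symm_apply, EuclideanSpace.inner_toLp_toLp, star_mulVec, dotProduct_comm,
    ← dotProduct_mulVec, hB.eq]

theorem continuous_inv_of_forall_isUnit {X : Type*} [TopologicalSpace X] [DecidableEq m]
    {N : X → Matrix m m 𝕜} (hN : Continuous N) (hunit : ∀ x, IsUnit (N x)) :
    Continuous fun x => (N x)⁻¹ := by
  refine continuous_iff_continuousAt.2 fun x => (continuousAt_matrix_inv _ ?_).comp hN.continuousAt
  obtain ⟨u, hu⟩ := (isUnit_iff_isUnit_det _).1 (hunit x)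
  rw [← hu]
  exact NormedRing.inverse_continuousAt u

-- Bundled linearly in the weight `X`, so that continuity in `X` is automatic in finite dimension.
def weightedGramOnRange (A : Matrix m n 𝕜) :
    Matrix m m 𝕜 →ₗ[𝕜] (LinearMap.range Aᴴ.mulVecLin →L[𝕜] LinearMap.range Aᴴ.mulVecLin) where
  toFun X := LinearMap.toContinuousLinearMap
    (Aᴴ.mulVecLin.rangeRestrict ∘ₗ (X * A).mulVecLin ∘ₗ (LinearMap.range Aᴴ.mulVecLin).subtype)
  map_add' X Y := by ext; simp [Matrix.add_mul, mulVec_add]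
  map_smul' c X := by ext; simp [Matrix.smul_mul]

theorem coe_weightedGramOnRange_apply (A : Matrix m n 𝕜) (X : Matrix m m 𝕜)
    (x : LinearMap.range Aᴴ.mulVecLin) :
    (A.weightedGramOnRange X x : n → 𝕜) = (Aᴴ * X * A) *ᵥ x := by
  simp [weightedGramOnRange, Matrix.mul_assoc, mulVec_mulVec]

theorem continuous_weightedGramOnRange (A : Matrix m n 𝕜) : Continuous A.weightedGramOnRange :=
  LinearMap.continuous_of_finiteDimensional
    (F' := LinearMap.range Aᴴ.mulVecLin →L[𝕜] LinearMap.range Aᴴ.mulVecLin) _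

theorem isUnit_weightedGramOnRange {B : Matrix m m 𝕜} (hB : B.PosDef) (A : Matrix m n 𝕜) :
    IsUnit (A.weightedGramOnRange B) := by
  have hbij := bijOn_conjTranspose_mul_mul_mulVec hB A
  have : ⇑(A.weightedGramOnRange B) = hbij.mapsTo.restrict _ _ _ :=
    funext fun x => Subtype.ext (coe_weightedGramOnRange_apply A B x)
  rw [ContinuousLinearMap.isUnit_iff_bijective, this]
  exact hbij.bijective

theorem tendsto_of_weighted_normal_eq {α : Type*} {l : Filter α} {A : Matrix m n 𝕜} {b : m → 𝕜}
    {K : α → Matrix m m 𝕜} {B : Matrix m m 𝕜} (hB : B.PosDef) (hK : Tendsto K l (𝓝 B))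
    {y : α → n → 𝕜}
    (hy : ∀ᶠ a in l, y a ∈ LinearMap.range Aᴴ.mulVecLin ∧ (Aᴴ * K a * A) *ᵥ y a = (Aᴴ * K a) *ᵥ b)
    {y₀ : n → 𝕜} (hy₀ : y₀ ∈ LinearMap.range Aᴴ.mulVecLin)
    (h₀ : (Aᴴ * B * A) *ᵥ y₀ = (Aᴴ * B) *ᵥ b) : Tendsto y l (𝓝 y₀) := by
  have hrhs : Continuous fun X : Matrix m m 𝕜 => (Aᴴ * X) *ᵥ b :=
    (continuous_const.matrix_mul continuous_id).matrix_mulVec continuous_const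
  refine Submodule.tendsto_of_eventually_apply_eq (y₀ := ⟨y₀, hy₀⟩)
    (r := fun a => ⟨(Aᴴ * K a) *ᵥ b, mul_mulVec_mem_range_mulVecLin _ _ _⟩)
    ((A.continuous_weightedGramOnRange.tendsto B).comp hK) (isUnit_weightedGramOnRange hB A) ?_ ?_
  · rw [tendsto_subtype_rng, coe_weightedGramOnRange_apply, h₀]
    exact (hrhs.tendsto B).comp hK
  · filter_upwards [hy] with a ⟨hmem, heq⟩
    exact ⟨hmem, Subtype.ext ((coe_weightedGramOnRange_apply _ _ _).trans heq)⟩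

end Matrix

open Matrix

/-- With `𝒜` a `p × d` complex matrix, `b ∈ ℂ^p`, `D, W, Ω₁` diagonal with
strictly positive diagonal entries and `L` strictly lower triangular (so `D + sΩ₁L` is
invertible for all `s ≥ 0`): the operator `𝒜* D⁻¹ W Ω₁ 𝒜` restricted to `M = range 𝒜*` is a
bijection of `M`; the unique `y_M ∈ M` solving `𝒜* D⁻¹ W Ω₁ 𝒜 y_M = 𝒜* D⁻¹ W Ω₁ b` is the
unique minimizer over `M` of the weighted least-squares functional
`x ↦ ⟨D⁻¹ W Ω₁ (b − 𝒜x), b − 𝒜x⟩`; and any `y(s) ∈ M` solving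
`𝒜* (D + sΩ₁L)⁻¹ W Ω₁ 𝒜 y(s) = 𝒜* (D + sΩ₁L)⁻¹ W Ω₁ b` for `s ∈ (0,1]` converges to `y_M` as
`s → 0⁺`. -/
theorem stmt_15 {p d : ℕ} (𝒜 : Matrix (Fin p) (Fin d) ℂ) (b : Fin p → ℂ)
    (d₀ w₀ o₀ : Fin p → ℝ) (hd : ∀ i, 0 < d₀ i) (hw : ∀ i, 0 < w₀ i) (ho : ∀ i, 0 < o₀ i)
    (D W Ω₁ : Matrix (Fin p) (Fin p) ℂ)
    (hD : D = Matrix.diagonal fun i => (d₀ i : ℂ))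
    (hW : W = Matrix.diagonal fun i => (w₀ i : ℂ))
    (hΩ : Ω₁ = Matrix.diagonal fun i => (o₀ i : ℂ))
    (L : Matrix (Fin p) (Fin p) ℂ) (hL : ∀ i j, i ≤ j → L i j = 0)
    (M : Submodule ℂ (Fin d → ℂ)) (hM : M = LinearMap.range (Matrix.mulVecLin 𝒜ᴴ))
    (F : (Fin d → ℂ) → ℝ)
    (hF : ∀ x, (F x : ℂ) =
      (inner ℂ ((WithLp.equiv 2 (Fin p → ℂ)).symm ((D⁻¹ * W * Ω₁).mulVec (b - 𝒜.mulVec x)))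
             ((WithLp.equiv 2 (Fin p → ℂ)).symm (b - 𝒜.mulVec x)) : ℂ)) :
    (∀ s : ℝ, 0 ≤ s → IsUnit (D + (s : ℂ) • (Ω₁ * L))) ∧
    Set.BijOn (fun x => (𝒜ᴴ * D⁻¹ * W * Ω₁ * 𝒜).mulVec x)
      (M : Set (Fin d → ℂ)) (M : Set (Fin d → ℂ)) ∧
    ∃ yM ∈ M,
      (𝒜ᴴ * D⁻¹ * W * Ω₁ * 𝒜).mulVec yM = (𝒜ᴴ * D⁻¹ * W * Ω₁).mulVec b ∧
      (∀ z ∈ M, (𝒜ᴴ * D⁻¹ * W * Ω₁ * 𝒜).mulVec z = (𝒜ᴴ * D⁻¹ * W * Ω₁).mulVec b → z = yM) ∧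
      (∀ x ∈ M, F yM ≤ F x) ∧
      (∀ x ∈ M, F x = F yM → x = yM) ∧
      ∀ y : ℝ → Fin d → ℂ,
        (∀ s ∈ Set.Ioc (0 : ℝ) 1, y s ∈ M ∧
          (𝒜ᴴ * (D + (s : ℂ) • (Ω₁ * L))⁻¹ * W * Ω₁ * 𝒜).mulVec (y s)
            = (𝒜ᴴ * (D + (s : ℂ) • (Ω₁ * L))⁻¹ * W * Ω₁).mulVec b) →
        Filter.Tendsto y (nhdsWithin 0 (Set.Ioc (0 : ℝ) 1)) (nhds yM) := by
  subst hM
  have hN : ∀ s : ℂ, IsUnit (D + s • (Ω₁ * L)) := fun s => by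
    rw [hD]
    refine isUnit_diagonal_add_of_strictLower (fun i => ?_) fun i j hij => ?_
    · exact isUnit_iff_ne_zero.2 (by exact_mod_cast (hd i).ne')
    · simp [hΩ, hL i j hij]
  have hB : (D⁻¹ * W * Ω₁).PosDef := by
    have hDinv : D⁻¹ = diagonal fun i => ((d₀ i : ℂ))⁻¹ := by
      rw [hD]
      exact inv_eq_left_inv (by simp [diagonal_mul_diagonal, (hd _).ne'])
    rw [hDinv, hW, hΩ, diagonal_mul_diagonal, diagonal_mul_diagonal, posDef_diagonal_iff]
    intro i
    exact_mod_cast mul_pos (mul_pos (inv_pos.2 (hd i)) (hw i)) (ho i)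
  have hassoc : ∀ X : Matrix (Fin p) (Fin p) ℂ, 𝒜ᴴ * X * W * Ω₁ = 𝒜ᴴ * (X * W * Ω₁) := fun X => by
    simp only [Matrix.mul_assoc]
  simp only [hassoc]
  set B := D⁻¹ * W * Ω₁
  have hbij := bijOn_conjTranspose_mul_mul_mulVec hB 𝒜
  obtain ⟨yM, hyM, hyM_eq⟩ := hbij.surjOn (mul_mulVec_mem_range_mulVecLin 𝒜ᴴ B b)
  have hF_eq : ∀ x, (F x : ℂ) = F yM + star (𝒜 *ᵥ (x - yM)) ⬝ᵥ (B *ᵥ (𝒜 *ᵥ (x - yM))) := by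
    intro x
    rw [hF, hF, inner_equiv_symm_mulVec_of_isHermitian hB.isHermitian,
      inner_equiv_symm_mulVec_of_isHermitian hB.isHermitian,
      star_residual_dotProduct_mulVec_residual_eq_add hB.isHermitian 𝒜 hyM_eq]
  refine ⟨fun s _ => hN s, hbij, yM, hyM, hyM_eq,
    fun z hz hz_eq => hbij.injOn hz hyM (hz_eq.trans hyM_eq.symm), fun x _ => ?_,
    fun x hx hFx => ?_, fun y hy => ?_⟩
  · have hnonneg := hB.posSemidef.dotProduct_mulVec_nonneg (𝒜 *ᵥ (x - yM))
    exact Complex.real_le_real.1 ((hF_eq x).symm ▸ le_add_of_nonneg_right hnonneg)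
  · have hq : star (𝒜 *ᵥ (x - yM)) ⬝ᵥ (B *ᵥ (𝒜 *ᵥ (x - yM))) = 0 := by
      have hsplit := hF_eq x
      rw [hFx] at hsplit
      linear_combination -hsplit
    exact sub_eq_zero.1 (𝒜.eq_zero_of_mem_range_conjTranspose_of_mulVec_eq_zero (sub_mem hx hyM)
      (hB.eq_zero_of_dotProduct_mulVec_self_eq_zero hq))
  · have hK : Continuous fun s : ℝ => (D + (s : ℂ) • (Ω₁ * L))⁻¹ * W * Ω₁ :=
      ((continuous_inv_of_forall_isUnit (by fun_prop) fun s : ℝ => hN s).matrix_mul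
        continuous_const).matrix_mul continuous_const
    refine tendsto_of_weighted_normal_eq hB ?_ (eventually_nhdsWithin_of_forall hy) hyM hyM_eq
    simpa [B] using (hK.tendsto 0).mono_left nhdsWithin_le_nhds
end

section
/- Let a_1,…,a_t be nonzero vectors in ℂ^d, let w_1,…,w_t be strictly positive reals, let 𝒢 be the t×t Gram matrix whose (j,k) entry is the inner product of a_j and a_k, and let ρ(𝒢) be its spectral radius. Suppose the relaxation parameters ω_1,…,ω_t satisfy 0 < ω_j < 2‖a_j‖² / (w_j ρ(𝒢)) for every j = 1,…,t. Then the operator P x = x − Σ_{j=1}^{t} (w_j ω_j / ‖a_j‖²) ⟨x, a_j⟩ a_j satisfies ‖P x‖ < ‖x‖ for every nonzero x ∈ H := span{a_1,…,a_t}; equivalently, the operator norm of the restriction of P to H is strictly less than 1. -/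
/-! Write `c_j = w_j ω_j / ‖a_j‖²` and `s = ∑ c_j ⟪a_j, x⟫ a_j`, so that `P x = x - s`. Then
`‖x - s‖² = ‖x‖² - 2 ∑ c_j |⟪a_j, x⟫|² + ‖s‖²`, and `‖s‖²` is the Gram quadratic form at the
coefficient vector, which a Rayleigh-quotient argument bounds by `ρ ∑ c_j² |⟪a_j, x⟫|²`. Hence
`‖x‖² - ‖P x‖² ≥ ∑ c_j (2 - ρ c_j) |⟪a_j, x⟫|²`; every term is nonnegative because `c_j ρ < 2`,
and one is positive because a nonzero vector of the span is not orthogonal to all `a_j`. -/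

open Matrix Module.End RCLike

section Rayleigh

variable {𝕜 E : Type*} [RCLike 𝕜] [NormedAddCommGroup E] [InnerProductSpace 𝕜 E]

theorem LinearMap.IsSymmetric.re_inner_apply_self_le [FiniteDimensional 𝕜 E] {T : E →ₗ[𝕜] E}
    (hT : T.IsSymmetric) {r : ℝ} (hr : ∀ μ : ℝ, HasEigenvalue T μ → μ ≤ r) (x : E) :
    re (inner 𝕜 (T x) x) ≤ r * ‖x‖ ^ 2 := by
  rcases eq_or_ne x 0 with rfl | hx
  · simp
  have : Nontrivial E := ⟨⟨x, 0, hx⟩⟩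
  have hbdd :
      BddAbove (Set.range fun y : {y : E // y ≠ 0} ↦ re (inner 𝕜 (T y) y) / ‖(y : E)‖ ^ 2) :=
    ⟨‖LinearMap.toContinuousLinearMap T‖, by
      rintro _ ⟨y, rfl⟩
      exact (le_abs_self _).trans (T.toContinuousLinearMap.rayleighQuotient_le_norm y)⟩
  have hquot := (le_ciSup hbdd ⟨x, hx⟩).trans (hr _ hT.hasEigenvalue_iSup_of_finiteDimensional)
  rwa [div_le_iff₀ (by positivity)] at hquot

theorem Matrix.IsHermitian.re_star_dotProduct_mulVec_le {n : Type*} [Fintype n] [DecidableEq n]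
    {A : Matrix n n 𝕜} (hA : A.IsHermitian) {r : ℝ}
    (hr : ∀ μ : ℝ, HasEigenvalue A.mulVecLin μ → μ ≤ r) (x : n → 𝕜) :
    re (star x ⬝ᵥ A *ᵥ x) ≤ r * ∑ i, ‖x i‖ ^ 2 := by
  have heig_iff : ∀ μ : 𝕜, HasEigenvalue (toEuclideanLin A) μ ↔ HasEigenvalue A.mulVecLin μ := by
    intro μ
    rw [hasEigenvalue_iff_mem_spectrum, hasEigenvalue_iff_mem_spectrum, ← toLin'_apply',
      spectrum_toLin']
    exact Set.ext_iff.mp (spectrum_toLpLin 2) μ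
  have h := (isSymmetric_toEuclideanLin_iff.mpr hA).re_inner_apply_self_le
    (fun μ hμ ↦ hr μ ((heig_iff μ).mp hμ)) (WithLp.toLp 2 x)
  rw [← inner_conj_symm, conj_re, toLpLin_toLp, EuclideanSpace.inner_toLp_toLp,
    dotProduct_comm, EuclideanSpace.norm_sq_eq] at h
  exact h

theorem norm_sum_smul_sq_le_of_gram {ι : Type*} [Fintype ι] [DecidableEq ι] (v : ι → E) {r : ℝ}
    (hr : ∀ μ : ℝ, HasEigenvalue (gram 𝕜 v).mulVecLin μ → μ ≤ r) (x : ι → 𝕜) :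
    ‖∑ i, x i • v i‖ ^ 2 ≤ r * ∑ i, ‖x i‖ ^ 2 := by
  rw [← inner_self_eq_norm_sq (𝕜 := 𝕜), ← star_dotProduct_gram_mulVec]
  exact (isHermitian_gram 𝕜 v).re_star_dotProduct_mulVec_le hr x

end Rayleigh

section Relaxation

variable {𝕜 E ι : Type*} [RCLike 𝕜] [NormedAddCommGroup E] [InnerProductSpace 𝕜 E]
  [Fintype ι] [DecidableEq ι] {a : ι → E} {ρ : ℝ}

theorem norm_sub_sum_inner_smul_sq_le
    (hρ : ∀ μ : ℝ, HasEigenvalue (gram 𝕜 a).mulVecLin μ → μ ≤ ρ) (c : ι → ℝ) (x : E) :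
    ‖x - ∑ j, ((c j : 𝕜) * inner 𝕜 (a j) x) • a j‖ ^ 2 ≤
      ‖x‖ ^ 2 - ∑ j, c j * (2 - ρ * c j) * ‖inner 𝕜 (a j) x‖ ^ 2 := by
  have hcross : re (inner 𝕜 x (∑ j, ((c j : 𝕜) * inner 𝕜 (a j) x) • a j)) =
      ∑ j, c j * ‖inner 𝕜 (a j) x‖ ^ 2 := by
    simp only [inner_sum, inner_smul_right, map_sum]
    refine Finset.sum_congr rfl fun j _ ↦ ?_
    rw [← inner_conj_symm x (a j), mul_assoc, mul_conj, ← ofReal_pow, ← ofReal_mul, ofReal_re]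
  have hsum := norm_sum_smul_sq_le_of_gram a hρ fun j ↦ (c j : 𝕜) * inner 𝕜 (a j) x
  simp only [norm_mul, norm_ofReal, mul_pow, sq_abs] at hsum
  rw [@norm_sub_sq 𝕜, hcross]
  have hexpand : ∑ j, c j * (2 - ρ * c j) * ‖inner 𝕜 (a j) x‖ ^ 2 =
      2 * ∑ j, c j * ‖inner 𝕜 (a j) x‖ ^ 2 - ρ * ∑ j, c j ^ 2 * ‖inner 𝕜 (a j) x‖ ^ 2 := by
    simp only [Finset.mul_sum, ← Finset.sum_sub_distrib]
    exact Finset.sum_congr rfl fun j _ ↦ by ring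
  linarith

theorem norm_sub_sum_inner_smul_lt
    (hρ : ∀ μ : ℝ, HasEigenvalue (gram 𝕜 a).mulVecLin μ → μ ≤ ρ) {c : ι → ℝ}
    (hc : ∀ j, 0 < c j ∧ c j * ρ < 2) {x : E} (hx : ∃ j, inner 𝕜 (a j) x ≠ 0) :
    ‖x - ∑ j, ((c j : 𝕜) * inner 𝕜 (a j) x) • a j‖ < ‖x‖ := by
  obtain ⟨j₀, hj₀⟩ := hx
  have hterm : ∀ j, 0 ≤ c j * (2 - ρ * c j) * ‖inner 𝕜 (a j) x‖ ^ 2 := fun j ↦ by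
    have := hc j
    exact mul_nonneg (mul_nonneg this.1.le (by linarith)) (sq_nonneg _)
  have hpos : 0 < ∑ j, c j * (2 - ρ * c j) * ‖inner 𝕜 (a j) x‖ ^ 2 := by
    refine Finset.sum_pos' (fun j _ ↦ hterm j) ⟨j₀, Finset.mem_univ _, ?_⟩
    have := hc j₀
    exact mul_pos (mul_pos this.1 (by linarith)) (by positivity)
  refine lt_of_pow_lt_pow_left₀ 2 (norm_nonneg x) ?_
  linarith [norm_sub_sum_inner_smul_sq_le hρ c x]

end Relaxation

theorem exists_inner_ne_zero_of_mem_span {𝕜 E ι : Type*} [RCLike 𝕜] [NormedAddCommGroup E]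
    [InnerProductSpace 𝕜 E] {a : ι → E} {x : E} (hx : x ∈ Submodule.span 𝕜 (Set.range a))
    (hx₀ : x ≠ 0) : ∃ j, inner 𝕜 (a j) x ≠ 0 := by
  by_contra! h
  have hspan : Submodule.span 𝕜 (Set.range a) ≤ (𝕜 ∙ x)ᗮ := by
    rw [Submodule.span_le]
    rintro _ ⟨j, rfl⟩
    exact Submodule.mem_orthogonal_singleton_iff_inner_right.mpr (inner_eq_zero_symm.mp (h j))
  exact hx₀ <| inner_self_eq_zero.mp <|
    Submodule.mem_orthogonal_singleton_iff_inner_right.mp (hspan hx)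

theorem Module.End.norm_le_sSup_norm_of_hasEigenvalue {K V : Type*} [NormedField K]
    [AddCommGroup V] [Module K V] [FiniteDimensional K V] {f : End K V} {μ : K}
    (hμ : f.HasEigenvalue μ) : ‖μ‖ ≤ sSup {r : ℝ | ∃ ν : K, f.HasEigenvalue ν ∧ r = ‖ν‖} := by
  refine le_csSup ?_ ⟨μ, hμ, rfl⟩
  refine ((f.finite_hasEigenvalue.image (‖·‖)).subset ?_).bddAbove
  rintro _ ⟨ν, hν, rfl⟩
  exact ⟨ν, hν, rfl⟩

theorem relaxation_coeff_pos_and_mul_lt_two {w ω n ρ : ℝ} (hn : 0 ≤ n) (hρ : 0 ≤ ρ)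
    (hω : 0 < ω ∧ ω < 2 * n / (w * ρ)) : 0 < w * ω / n ∧ w * ω / n * ρ < 2 := by
  obtain ⟨hω₀, hω₁⟩ := hω
  have hquot : 0 < 2 * n / (w * ρ) := hω₀.trans hω₁
  obtain ⟨hn₀, hwρ⟩ : 0 < 2 * n ∧ 0 < w * ρ := by
    rcases div_pos_iff.mp hquot with h | h
    · exact h
    · linarith [h.1]
  have hw : 0 < w := pos_of_mul_pos_left hwρ hρ
  rw [lt_div_iff₀ hwρ] at hω₁
  refine ⟨div_pos (mul_pos hw hω₀) (by linarith), ?_⟩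
  rw [div_mul_eq_mul_div, div_lt_iff₀ (by linarith)]
  linarith

theorem stmt_17_general {d t : ℕ} (a : Fin t → EuclideanSpace ℂ (Fin d))
    (w : Fin t → ℝ)
    (𝒢 : Matrix (Fin t) (Fin t) ℂ) (h𝒢 : ∀ j k, 𝒢 j k = (inner ℂ (a j) (a k) : ℂ))
    (ρ : ℝ)
    (hρ : ρ = sSup {r : ℝ | ∃ μ : ℂ,
      Module.End.HasEigenvalue (Matrix.mulVecLin 𝒢) μ ∧ r = ‖μ‖})
    (ω : Fin t → ℝ) (hω : ∀ j, 0 < ω j ∧ ω j < 2 * ‖a j‖ ^ 2 / (w j * ρ))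
    (P : EuclideanSpace ℂ (Fin d) → EuclideanSpace ℂ (Fin d))
    (hP : ∀ x, P x = x - ∑ j, (((w j * ω j / ‖a j‖ ^ 2 : ℝ) : ℂ) * (inner ℂ (a j) x : ℂ)) • a j) :
    ∀ x ∈ Submodule.span ℂ (Set.range a), x ≠ 0 → ‖P x‖ < ‖x‖ := by
  intro x hx hx₀
  have h𝒢_gram : 𝒢 = gram ℂ a := Matrix.ext h𝒢
  have hρ₀ : 0 ≤ ρ := hρ ▸ Real.sSup_nonneg (by rintro _ ⟨μ, -, rfl⟩; exact norm_nonneg μ)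
  have heig : ∀ μ : ℝ, HasEigenvalue (gram ℂ a).mulVecLin μ → μ ≤ ρ := fun μ hμ ↦
    calc μ ≤ ‖(μ : ℂ)‖ := by rw [Complex.norm_real]; exact le_abs_self μ
      _ ≤ ρ := hρ ▸ h𝒢_gram ▸ norm_le_sSup_norm_of_hasEigenvalue hμ
  rw [hP]
  exact norm_sub_sum_inner_smul_lt heig
    (fun j ↦ relaxation_coeff_pos_and_mul_lt_two (sq_nonneg _) hρ₀ (hω j))
    (exists_inner_ne_zero_of_mem_span hx hx₀)

/-- For nonzero vectors `a_1,…,a_t` in `ℂ^d` with Gram matrix `𝒢` of spectral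
radius `ρ(𝒢)`, positive weights `w_j`, and relaxation parameters
`0 < ω_j < 2‖a_j‖²/(w_j ρ(𝒢))`, the operator
`P x = x − Σ_j (w_j ω_j/‖a_j‖²) ⟨x,a_j⟩ a_j` satisfies `‖P x‖ < ‖x‖` for every nonzero
`x ∈ span{a_1,…,a_t}`. -/
theorem stmt_17 {d t : ℕ} (a : Fin t → EuclideanSpace ℂ (Fin d)) (ha : ∀ j, a j ≠ 0)
    (w : Fin t → ℝ) (hw : ∀ j, 0 < w j)
    (𝒢 : Matrix (Fin t) (Fin t) ℂ) (h𝒢 : ∀ j k, 𝒢 j k = (inner ℂ (a j) (a k) : ℂ))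
    (ρ : ℝ)
    (hρ : ρ = sSup {r : ℝ | ∃ μ : ℂ,
      Module.End.HasEigenvalue (Matrix.mulVecLin 𝒢) μ ∧ r = ‖μ‖})
    (ω : Fin t → ℝ) (hω : ∀ j, 0 < ω j ∧ ω j < 2 * ‖a j‖ ^ 2 / (w j * ρ))
    (P : EuclideanSpace ℂ (Fin d) → EuclideanSpace ℂ (Fin d))
    (hP : ∀ x, P x = x - ∑ j, (((w j * ω j / ‖a j‖ ^ 2 : ℝ) : ℂ) * (inner ℂ (a j) x : ℂ)) • a j) :
    ∀ x ∈ Submodule.span ℂ (Set.range a), x ≠ 0 → ‖P x‖ < ‖x‖ :=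
  stmt_17_general a w 𝒢 h𝒢 ρ hρ ω hω P hP
end
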